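/- arXiv:2501.02528 — 3 statements merged into one kernel-verified Lean document; each statement's English description precedes it below -/
import Mathlib

section
/- Let (M,d,+) be a complete metric semigroup and Λ = {λ_{i,j}} a Waterman sequence (positive, decreasing in each variable, λ_{n,m} → 0 and Σ λ_{i,j} = ∞). Then the bivariate Waterman bounded variation space (ΛBV(I×I,M), ρ_Λ), with ρ_Λ(f,g) = d(f(0,0),g(0,0)) + V_Λ(f,g), is a complete metric space. -/
open Finset

/-- `t` represents a partition `0 = t 0 < t 1 < ⋯ < t n = 1` of `[0,1]`. -/
def IsPartition (n : ℕ) (t : ℕ → ℝ) : Prop :=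
  0 < n ∧ t 0 = 0 ∧ t n = 1 ∧ ∀ i < n, t i < t (i + 1)

/-- `Λ` (with entries `Λ i j` for `i, j ≥ 1`) is a bivariate Waterman sequence:
positive, decreasing in each index, `λ_{n,m} → 0`, and `Σ λ_{i,j} = ∞`. -/
def IsWatermanSeq (Λ : ℕ → ℕ → ℝ) : Prop :=
  (∀ i j, 1 ≤ i → 1 ≤ j → 0 < Λ i j)
  ∧ (∀ j, 1 ≤ j → ∀ i i', 1 ≤ i → i ≤ i' → Λ i' j ≤ Λ i j)
  ∧ (∀ i, 1 ≤ i → ∀ j j', 1 ≤ j → j ≤ j' → Λ i j' ≤ Λ i j)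
  ∧ Filter.Tendsto (fun q : ℕ × ℕ => Λ (q.1 + 1) (q.2 + 1)) Filter.atTop (nhds 0)
  ∧ ¬ Summable (fun q : ℕ × ℕ => Λ (q.1 + 1) (q.2 + 1))

variable {M : Type*} [MetricSpace M] [AddCommSemigroup M]

noncomputable def watSum1 (Λ : ℕ → ℕ → ℝ) (f : ℝ → ℝ → M) (n : ℕ) (t : ℕ → ℝ) : ℝ :=
  ∑ i ∈ range n, Λ (i + 1) 1 * dist (f (t (i + 1)) 0) (f (t i) 0)

noncomputable def watSum2 (Λ : ℕ → ℕ → ℝ) (f : ℝ → ℝ → M) (m : ℕ) (s : ℕ → ℝ) : ℝ :=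
  ∑ j ∈ range m, Λ 1 (j + 1) * dist (f 0 (s (j + 1))) (f 0 (s j))

noncomputable def watSum12 (Λ : ℕ → ℕ → ℝ) (f : ℝ → ℝ → M) (n : ℕ) (t : ℕ → ℝ)
    (m : ℕ) (s : ℕ → ℝ) : ℝ :=
  ∑ j ∈ range m, ∑ i ∈ range n, Λ (i + 1) (j + 1) *
    dist (f (t (i + 1)) (s (j + 1)) + f (t i) (s j))
         (f (t (i + 1)) (s j) + f (t i) (s (j + 1)))

noncomputable def watSum1J (Λ : ℕ → ℕ → ℝ) (f g : ℝ → ℝ → M) (n : ℕ) (t : ℕ → ℝ) : ℝ :=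
  ∑ i ∈ range n, Λ (i + 1) 1 *
    dist (f (t (i + 1)) 0 + g (t i) 0) (f (t i) 0 + g (t (i + 1)) 0)

noncomputable def watSum2J (Λ : ℕ → ℕ → ℝ) (f g : ℝ → ℝ → M) (m : ℕ) (s : ℕ → ℝ) : ℝ :=
  ∑ j ∈ range m, Λ 1 (j + 1) *
    dist (f 0 (s (j + 1)) + g 0 (s j)) (f 0 (s j) + g 0 (s (j + 1)))

noncomputable def watSum12J (Λ : ℕ → ℕ → ℝ) (f g : ℝ → ℝ → M) (n : ℕ) (t : ℕ → ℝ)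
    (m : ℕ) (s : ℕ → ℝ) : ℝ :=
  ∑ j ∈ range m, ∑ i ∈ range n, Λ (i + 1) (j + 1) *
    dist (f (t (i + 1)) (s (j + 1)) + f (t i) (s j)
            + g (t (i + 1)) (s j) + g (t i) (s (j + 1)))
         (g (t (i + 1)) (s (j + 1)) + g (t i) (s j)
            + f (t (i + 1)) (s j) + f (t i) (s (j + 1)))

def watSet1 (Λ : ℕ → ℕ → ℝ) (f : ℝ → ℝ → M) : Set ℝ :=
  {x | ∃ n t, IsPartition n t ∧ x = watSum1 Λ f n t}

def watSet2 (Λ : ℕ → ℕ → ℝ) (f : ℝ → ℝ → M) : Set ℝ :=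
  {x | ∃ m s, IsPartition m s ∧ x = watSum2 Λ f m s}

def watSet12 (Λ : ℕ → ℕ → ℝ) (f : ℝ → ℝ → M) : Set ℝ :=
  {x | ∃ n t m s, IsPartition n t ∧ IsPartition m s ∧ x = watSum12 Λ f n t m s}

/-- Total Waterman variation `V_Λ(f)`. -/
noncomputable def VLam (Λ : ℕ → ℕ → ℝ) (f : ℝ → ℝ → M) : ℝ :=
  sSup (watSet1 Λ f) + sSup (watSet2 Λ f) + sSup (watSet12 Λ f)

/-- `f` has bounded bivariate Waterman `Λ`-variation. -/
def MemLamBV (Λ : ℕ → ℕ → ℝ) (f : ℝ → ℝ → M) : Prop :=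
  BddAbove (watSet1 Λ f) ∧ BddAbove (watSet2 Λ f) ∧ BddAbove (watSet12 Λ f)

/-- Joint Waterman variation over a fixed pair of partitions, `V_Λ(f,g,Π×Π*)`. -/
noncomputable def VLamPart (Λ : ℕ → ℕ → ℝ) (f g : ℝ → ℝ → M) (n : ℕ) (t : ℕ → ℝ)
    (m : ℕ) (s : ℕ → ℝ) : ℝ :=
  watSum1J Λ f g n t + watSum2J Λ f g m s + watSum12J Λ f g n t m s

def watSetJ (Λ : ℕ → ℕ → ℝ) (f g : ℝ → ℝ → M) : Set ℝ :=
  {x | ∃ n t m s, IsPartition n t ∧ IsPartition m s ∧ x = VLamPart Λ f g n t m s}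

/-- Joint Waterman variation `V_Λ(f,g)`. -/
noncomputable def VLamJ (Λ : ℕ → ℕ → ℝ) (f g : ℝ → ℝ → M) : ℝ := sSup (watSetJ Λ f g)

/-- The metric `ρ_Λ(f,g) = d(f(0,0), g(0,0)) + V_Λ(f,g)`. -/
noncomputable def rhoLam (Λ : ℕ → ℕ → ℝ) (f g : ℝ → ℝ → M) : ℝ :=
  dist (f 0 0) (g 0 0) + VLamJ Λ f g


section Aux

variable (hd : ∀ u v w : M, dist (u + w) (v + w) = dist u v)

lemma hd' (hd : ∀ u v w : M, dist (u + w) (v + w) = dist u v)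
    (u v w : M) : dist (w + u) (w + v) = dist u v := by
  rw [add_comm w u, add_comm w v]; exact hd u v w

lemma dist_add_add (hd : ∀ u v w : M, dist (u + w) (v + w) = dist u v)
    (a b c d : M) : dist (a + b) (c + d) ≤ dist a c + dist b d := by
  calc dist (a + b) (c + d) ≤ dist (a + b) (c + b) + dist (c + b) (c + d) := dist_triangle _ _ _
    _ = dist a c + dist b d := by rw [hd a c b, hd' hd b d c]

lemma keyJ (hd : ∀ u v w : M, dist (u + w) (v + w) = dist u v)
    (a b c a' b' c' : M) :
    dist (a + b') (b + a') ≤ dist (a + c') (c + a') + dist (c + b') (b + c') := by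
  have e0 : dist (a + b') (b + a') = dist ((a + b') + (c + c')) ((b + a') + (c + c')) :=
    (hd _ _ _).symm
  calc dist (a + b') (b + a')
      = dist ((a + c') + (b' + c)) ((b + c') + (a' + c)) := by
        rw [e0]; congr 1 <;> ac_rfl
    _ ≤ dist ((a + c') + (b' + c)) ((c + a') + (b' + c))
        + dist ((c + a') + (b' + c)) ((b + c') + (a' + c)) := dist_triangle _ _ _
    _ = dist (a + c') (c + a') + dist (c + b') (b + c') := by
        rw [hd (a + c') (c + a') (b' + c)]
        congr 1
        rw [show (c + a') + (b' + c) = (c + b') + (a' + c) by ac_rfl, hd (c + b') (b + c') (a' + c)]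

lemma key2 (hd : ∀ u v w : M, dist (u + w) (v + w) = dist u v)
    (a b c c' : M) :
    dist a b ≤ dist (a + c') (c + b) + dist c c' := by
  have e0 : dist a b = dist (a + (c + c')) (b + (c + c')) := (hd _ _ _).symm
  calc dist a b = dist ((a + c') + c) ((b + c') + c) := by rw [e0]; congr 1 <;> ac_rfl
    _ ≤ dist ((a + c') + c) ((c + b) + c) + dist ((c + b) + c) ((b + c') + c) := dist_triangle _ _ _
    _ = dist (a + c') (c + b) + dist c c' := by
        rw [hd (a + c') (c + b) c]
        congr 1
        rw [show (c + b) + c = c + (b + c) by ac_rfl, show (b + c') + c = c' + (b + c) by ac_rfl,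
          hd c c' (b + c)]

end Aux

lemma isPartition_mono {n : ℕ} {t : ℕ → ℝ} (h : IsPartition n t) :
    ∀ i j, i ≤ j → j ≤ n → t i ≤ t j := by
  intro i j hij hjn
  induction j with
  | zero => simp_all
  | succ k ih =>
    rcases Nat.eq_or_lt_of_le hij with rfl | hlt
    · exact le_refl _
    · exact le_trans (ih (Nat.lt_succ_iff.mp hlt) (le_trans (Nat.le_succ k) hjn))
        (le_of_lt (h.2.2.2 k (Nat.lt_of_succ_le hjn)))

lemma isPartition_mem {n : ℕ} {t : ℕ → ℝ} (h : IsPartition n t) {i : ℕ} (hi : i ≤ n) :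
    t i ∈ Set.Icc (0:ℝ) 1 := by
  constructor
  · rw [← h.2.1]; exact isPartition_mono h 0 i (Nat.zero_le _) hi
  · rw [← h.2.2.1]; exact isPartition_mono h i n hi le_rfl

def pTriv : ℕ → ℝ := fun k => if k = 0 then 0 else 1

lemma pTriv_part : IsPartition 1 pTriv := by
  refine ⟨one_pos, rfl, rfl, ?_⟩
  intro i hi
  interval_cases i
  norm_num [pTriv]

noncomputable def pOf (x : ℝ) : ℕ → ℝ := fun k => if k = 0 then 0 else if k = 1 then x else 1

noncomputable def nOf (x : ℝ) : ℕ := if x = 1 then 1 else 2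

lemma pOf_zero (x : ℝ) : pOf x 0 = 0 := rfl
lemma pOf_one (x : ℝ) : pOf x 1 = x := rfl

lemma pOf_part {x : ℝ} (h0 : 0 < x) (h1 : x ≤ 1) : IsPartition (nOf x) (pOf x) := by
  unfold nOf
  by_cases hx : x = 1
  · subst hx
    rw [if_pos rfl]
    refine ⟨by norm_num, rfl, by norm_num [pOf], ?_⟩
    intro i hi
    interval_cases i
    simpa [pOf] using h0
  · rw [if_neg hx]
    refine ⟨by norm_num, rfl, rfl, ?_⟩
    intro i hi
    interval_cases i
    · simpa [pOf] using h0
    · simpa [pOf] using lt_of_le_of_ne h1 hx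


section Mid

variable (Λ : ℕ → ℕ → ℝ)

variable (hΛ0 : ∀ i j, 1 ≤ i → 1 ≤ j → 0 < Λ i j)

section Nonneg
variable (f g : ℝ → ℝ → M) (n : ℕ) (t : ℕ → ℝ) (m : ℕ) (s : ℕ → ℝ)

lemma lam_nonneg (hΛ0 : ∀ i j, 1 ≤ i → 1 ≤ j → 0 < Λ i j) (i j : ℕ) :
    0 ≤ Λ (i + 1) (j + 1) := le_of_lt (hΛ0 _ _ (Nat.succ_le_succ (Nat.zero_le _)) (Nat.succ_le_succ (Nat.zero_le _)))

lemma watSum1_nonneg (hΛ0 : ∀ i j, 1 ≤ i → 1 ≤ j → 0 < Λ i j) : 0 ≤ watSum1 Λ f n t :=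
  Finset.sum_nonneg fun i _ => mul_nonneg (lam_nonneg Λ hΛ0 i 0) dist_nonneg

lemma watSum2_nonneg (hΛ0 : ∀ i j, 1 ≤ i → 1 ≤ j → 0 < Λ i j) : 0 ≤ watSum2 Λ f m s :=
  Finset.sum_nonneg fun j _ => mul_nonneg (lam_nonneg Λ hΛ0 0 j) dist_nonneg

lemma watSum12_nonneg (hΛ0 : ∀ i j, 1 ≤ i → 1 ≤ j → 0 < Λ i j) : 0 ≤ watSum12 Λ f n t m s :=
  Finset.sum_nonneg fun j _ => Finset.sum_nonneg fun i _ =>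
    mul_nonneg (lam_nonneg Λ hΛ0 i j) dist_nonneg

lemma watSum1J_nonneg (hΛ0 : ∀ i j, 1 ≤ i → 1 ≤ j → 0 < Λ i j) : 0 ≤ watSum1J Λ f g n t :=
  Finset.sum_nonneg fun i _ => mul_nonneg (lam_nonneg Λ hΛ0 i 0) dist_nonneg

lemma watSum2J_nonneg (hΛ0 : ∀ i j, 1 ≤ i → 1 ≤ j → 0 < Λ i j) : 0 ≤ watSum2J Λ f g m s :=
  Finset.sum_nonneg fun j _ => mul_nonneg (lam_nonneg Λ hΛ0 0 j) dist_nonneg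

lemma watSum12J_nonneg (hΛ0 : ∀ i j, 1 ≤ i → 1 ≤ j → 0 < Λ i j) : 0 ≤ watSum12J Λ f g n t m s :=
  Finset.sum_nonneg fun j _ => Finset.sum_nonneg fun i _ =>
    mul_nonneg (lam_nonneg Λ hΛ0 i j) dist_nonneg

lemma VLamPart_nonneg (hΛ0 : ∀ i j, 1 ≤ i → 1 ≤ j → 0 < Λ i j) : 0 ≤ VLamPart Λ f g n t m s :=
  add_nonneg (add_nonneg (watSum1J_nonneg Λ f g n t hΛ0) (watSum2J_nonneg Λ f g m s hΛ0))
    (watSum12J_nonneg Λ f g n t m s hΛ0)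

end Nonneg

section Symm
variable (f g : ℝ → ℝ → M) (n : ℕ) (t : ℕ → ℝ) (m : ℕ) (s : ℕ → ℝ)

lemma watSum1J_symm : watSum1J Λ f g n t = watSum1J Λ g f n t := by
  unfold watSum1J
  refine Finset.sum_congr rfl fun i _ => ?_
  rw [dist_comm, add_comm (f (t (i+1)) 0), add_comm (f (t i) 0)]

lemma watSum2J_symm : watSum2J Λ f g m s = watSum2J Λ g f m s := by
  unfold watSum2J
  refine Finset.sum_congr rfl fun j _ => ?_
  rw [dist_comm, add_comm (f 0 (s (j+1))), add_comm (f 0 (s j))]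

lemma watSum12J_symm : watSum12J Λ f g n t m s = watSum12J Λ g f n t m s := by
  unfold watSum12J
  refine Finset.sum_congr rfl fun j _ => Finset.sum_congr rfl fun i _ => ?_
  rw [dist_comm]

lemma VLamPart_symm : VLamPart Λ f g n t m s = VLamPart Λ g f n t m s := by
  unfold VLamPart
  rw [watSum1J_symm, watSum2J_symm, watSum12J_symm]

lemma watSetJ_symm : watSetJ Λ f g = watSetJ Λ g f := by
  unfold watSetJ
  ext x
  constructor <;> rintro ⟨n, t, m, s, h1, h2, rfl⟩ <;>
    exact ⟨n, t, m, s, h1, h2, (VLamPart_symm Λ _ _ n t m s)⟩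

lemma VLamJ_symm : VLamJ Λ f g = VLamJ Λ g f := by
  unfold VLamJ; rw [watSetJ_symm]

end Symm

section Compare
variable (f g h : ℝ → ℝ → M) (n : ℕ) (t : ℕ → ℝ) (m : ℕ) (s : ℕ → ℝ)
lemma keyJ' (hd : ∀ u v w : M, dist (u + w) (v + w) = dist u v) (a b c a' b' c' : M) :
    dist (a + b') (a' + b) ≤ dist (a + c') (a' + c) + dist (c + b') (c' + b) := by
  have h := keyJ hd a b c a' b' c'
  rwa [add_comm b a', add_comm c a', add_comm b c'] at h

lemma key2' (hd : ∀ u v w : M, dist (u + w) (v + w) = dist u v) (a b c c' : M) :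
    dist a b ≤ dist (a + c') (b + c) + dist c c' := by
  have h := key2 hd a b c c'
  rwa [add_comm c b] at h

-- watSumkJ f g ≤ watSumk f + watSumk g
lemma watSum1J_le_add (hd : ∀ u v w : M, dist (u + w) (v + w) = dist u v)
    (hΛ0 : ∀ i j, 1 ≤ i → 1 ≤ j → 0 < Λ i j) : watSum1J Λ f g n t ≤ watSum1 Λ f n t + watSum1 Λ g n t := by
  unfold watSum1J watSum1
  rw [← Finset.sum_add_distrib]
  refine Finset.sum_le_sum fun i _ => ?_
  rw [← mul_add]
  refine mul_le_mul_of_nonneg_left ?_ (lam_nonneg Λ hΛ0 i 0)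
  calc dist (f (t (i+1)) 0 + g (t i) 0) (f (t i) 0 + g (t (i+1)) 0)
      ≤ dist (f (t (i+1)) 0) (f (t i) 0) + dist (g (t i) 0) (g (t (i+1)) 0) :=
        dist_add_add hd _ _ _ _
    _ = _ := by rw [dist_comm (g (t i) 0)]

lemma watSum2J_le_add (hd : ∀ u v w : M, dist (u + w) (v + w) = dist u v)
    (hΛ0 : ∀ i j, 1 ≤ i → 1 ≤ j → 0 < Λ i j) : watSum2J Λ f g m s ≤ watSum2 Λ f m s + watSum2 Λ g m s := by
  unfold watSum2J watSum2
  rw [← Finset.sum_add_distrib]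
  refine Finset.sum_le_sum fun j _ => ?_
  rw [← mul_add]
  refine mul_le_mul_of_nonneg_left ?_ (lam_nonneg Λ hΛ0 0 j)
  calc dist (f 0 (s (j+1)) + g 0 (s j)) (f 0 (s j) + g 0 (s (j+1)))
      ≤ dist (f 0 (s (j+1))) (f 0 (s j)) + dist (g 0 (s j)) (g 0 (s (j+1))) :=
        dist_add_add hd _ _ _ _
    _ = _ := by rw [dist_comm (g 0 (s j))]

lemma watSum12J_le_add (hd : ∀ u v w : M, dist (u + w) (v + w) = dist u v)
    (hΛ0 : ∀ i j, 1 ≤ i → 1 ≤ j → 0 < Λ i j) :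
    watSum12J Λ f g n t m s ≤ watSum12 Λ f n t m s + watSum12 Λ g n t m s := by
  unfold watSum12J watSum12
  rw [← Finset.sum_add_distrib]
  refine Finset.sum_le_sum fun j _ => ?_
  rw [← Finset.sum_add_distrib]
  refine Finset.sum_le_sum fun i _ => ?_
  rw [← mul_add]
  refine mul_le_mul_of_nonneg_left ?_ (lam_nonneg Λ hΛ0 i j)
  calc dist (f (t (i+1)) (s (j+1)) + f (t i) (s j) + g (t (i+1)) (s j) + g (t i) (s (j+1)))
        (g (t (i+1)) (s (j+1)) + g (t i) (s j) + f (t (i+1)) (s j) + f (t i) (s (j+1)))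
      = dist ((f (t (i+1)) (s (j+1)) + f (t i) (s j)) + (g (t (i+1)) (s j) + g (t i) (s (j+1))))
          ((f (t (i+1)) (s j) + f (t i) (s (j+1))) + (g (t (i+1)) (s (j+1)) + g (t i) (s j))) := by
        congr 1 <;> ac_rfl
    _ ≤ dist (f (t (i+1)) (s (j+1)) + f (t i) (s j)) (f (t (i+1)) (s j) + f (t i) (s (j+1)))
        + dist (g (t (i+1)) (s j) + g (t i) (s (j+1))) (g (t (i+1)) (s (j+1)) + g (t i) (s j)) :=
        dist_add_add hd _ _ _ _
    _ = _ := by rw [dist_comm (g (t (i+1)) (s j) + g (t i) (s (j+1)))]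

-- triangle at the level of fixed partitions
lemma watSum1J_tri (hd : ∀ u v w : M, dist (u + w) (v + w) = dist u v)
    (hΛ0 : ∀ i j, 1 ≤ i → 1 ≤ j → 0 < Λ i j) : watSum1J Λ f g n t ≤ watSum1J Λ f h n t + watSum1J Λ h g n t := by
  unfold watSum1J
  rw [← Finset.sum_add_distrib]
  refine Finset.sum_le_sum fun i _ => ?_
  rw [← mul_add]
  exact mul_le_mul_of_nonneg_left
    (keyJ' hd (f (t (i+1)) 0) (g (t (i+1)) 0) (h (t (i+1)) 0)
      (f (t i) 0) (g (t i) 0) (h (t i) 0)) (lam_nonneg Λ hΛ0 i 0)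

lemma watSum2J_tri (hd : ∀ u v w : M, dist (u + w) (v + w) = dist u v)
    (hΛ0 : ∀ i j, 1 ≤ i → 1 ≤ j → 0 < Λ i j) : watSum2J Λ f g m s ≤ watSum2J Λ f h m s + watSum2J Λ h g m s := by
  unfold watSum2J
  rw [← Finset.sum_add_distrib]
  refine Finset.sum_le_sum fun j _ => ?_
  rw [← mul_add]
  exact mul_le_mul_of_nonneg_left
    (keyJ' hd (f 0 (s (j+1))) (g 0 (s (j+1))) (h 0 (s (j+1)))
      (f 0 (s j)) (g 0 (s j)) (h 0 (s j))) (lam_nonneg Λ hΛ0 0 j)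

lemma watSum12J_tri (hd : ∀ u v w : M, dist (u + w) (v + w) = dist u v)
    (hΛ0 : ∀ i j, 1 ≤ i → 1 ≤ j → 0 < Λ i j) :
    watSum12J Λ f g n t m s ≤ watSum12J Λ f h n t m s + watSum12J Λ h g n t m s := by
  unfold watSum12J
  rw [← Finset.sum_add_distrib]
  refine Finset.sum_le_sum fun j _ => ?_
  rw [← Finset.sum_add_distrib]
  refine Finset.sum_le_sum fun i _ => ?_
  rw [← mul_add]
  refine mul_le_mul_of_nonneg_left ?_ (lam_nonneg Λ hΛ0 i j)
  have h0 := keyJ hd (f (t (i+1)) (s (j+1)) + f (t i) (s j))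
    (g (t (i+1)) (s (j+1)) + g (t i) (s j)) (h (t (i+1)) (s (j+1)) + h (t i) (s j))
    (f (t (i+1)) (s j) + f (t i) (s (j+1)))
    (g (t (i+1)) (s j) + g (t i) (s (j+1))) (h (t (i+1)) (s j) + h (t i) (s (j+1)))
  calc dist (f (t (i+1)) (s (j+1)) + f (t i) (s j) + g (t (i+1)) (s j) + g (t i) (s (j+1)))
        (g (t (i+1)) (s (j+1)) + g (t i) (s j) + f (t (i+1)) (s j) + f (t i) (s (j+1)))
      = dist ((f (t (i+1)) (s (j+1)) + f (t i) (s j)) + (g (t (i+1)) (s j) + g (t i) (s (j+1))))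
          ((g (t (i+1)) (s (j+1)) + g (t i) (s j)) + (f (t (i+1)) (s j) + f (t i) (s (j+1)))) := by
        congr 1 <;> ac_rfl
    _ ≤ _ := le_trans h0 (le_of_eq (by congr 1 <;> congr 1 <;> ac_rfl))

lemma VLamPart_tri (hd : ∀ u v w : M, dist (u + w) (v + w) = dist u v)
    (hΛ0 : ∀ i j, 1 ≤ i → 1 ≤ j → 0 < Λ i j) :
    VLamPart Λ f g n t m s ≤ VLamPart Λ f h n t m s + VLamPart Λ h g n t m s := by
  unfold VLamPart
  have h1 := watSum1J_tri Λ f g h n t hd hΛ0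
  have h2 := watSum2J_tri Λ f g h m s hd hΛ0
  have h3 := watSum12J_tri Λ f g h n t m s hd hΛ0
  linarith

-- watSumk f ≤ watSumkJ f g + watSumk g
lemma watSum1_le_J (hd : ∀ u v w : M, dist (u + w) (v + w) = dist u v)
    (hΛ0 : ∀ i j, 1 ≤ i → 1 ≤ j → 0 < Λ i j) : watSum1 Λ f n t ≤ watSum1J Λ f g n t + watSum1 Λ g n t := by
  unfold watSum1J watSum1
  rw [← Finset.sum_add_distrib]
  refine Finset.sum_le_sum fun i _ => ?_
  rw [← mul_add]
  exact mul_le_mul_of_nonneg_left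
    (key2' hd (f (t (i+1)) 0) (f (t i) 0) (g (t (i+1)) 0) (g (t i) 0)) (lam_nonneg Λ hΛ0 i 0)

lemma watSum2_le_J (hd : ∀ u v w : M, dist (u + w) (v + w) = dist u v)
    (hΛ0 : ∀ i j, 1 ≤ i → 1 ≤ j → 0 < Λ i j) : watSum2 Λ f m s ≤ watSum2J Λ f g m s + watSum2 Λ g m s := by
  unfold watSum2J watSum2
  rw [← Finset.sum_add_distrib]
  refine Finset.sum_le_sum fun j _ => ?_
  rw [← mul_add]
  exact mul_le_mul_of_nonneg_left
    (key2' hd (f 0 (s (j+1))) (f 0 (s j)) (g 0 (s (j+1))) (g 0 (s j))) (lam_nonneg Λ hΛ0 0 j)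

lemma watSum12_le_J (hd : ∀ u v w : M, dist (u + w) (v + w) = dist u v)
    (hΛ0 : ∀ i j, 1 ≤ i → 1 ≤ j → 0 < Λ i j) :
    watSum12 Λ f n t m s ≤ watSum12J Λ f g n t m s + watSum12 Λ g n t m s := by
  unfold watSum12J watSum12
  rw [← Finset.sum_add_distrib]
  refine Finset.sum_le_sum fun j _ => ?_
  rw [← Finset.sum_add_distrib]
  refine Finset.sum_le_sum fun i _ => ?_
  rw [← mul_add]
  refine mul_le_mul_of_nonneg_left ?_ (lam_nonneg Λ hΛ0 i j)
  have h0 := key2' hd (f (t (i+1)) (s (j+1)) + f (t i) (s j))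
    (f (t (i+1)) (s j) + f (t i) (s (j+1)))
    (g (t (i+1)) (s (j+1)) + g (t i) (s j)) (g (t (i+1)) (s j) + g (t i) (s (j+1)))
  refine le_trans h0 ?_
  gcongr ?_ + ?_
  · exact le_of_eq (by congr 1 <;> ac_rfl)
  · exact le_rfl

end Compare

section Sup
variable (f g : ℝ → ℝ → M)

lemma bddAbove_watSetJ (hd : ∀ u v w : M, dist (u + w) (v + w) = dist u v)
    (hΛ0 : ∀ i j, 1 ≤ i → 1 ≤ j → 0 < Λ i j)
    (hf : MemLamBV Λ f) (hg : MemLamBV Λ g) : BddAbove (watSetJ Λ f g) := by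
  obtain ⟨⟨b1, hb1⟩, ⟨b2, hb2⟩, ⟨b3, hb3⟩⟩ := hf
  obtain ⟨⟨c1, hc1⟩, ⟨c2, hc2⟩, ⟨c3, hc3⟩⟩ := hg
  refine ⟨b1 + c1 + (b2 + c2) + (b3 + c3), ?_⟩
  rintro x ⟨n, t, m, s, hn, hm, rfl⟩
  have h1 : watSum1 Λ f n t ≤ b1 := hb1 ⟨n, t, hn, rfl⟩
  have h2 : watSum2 Λ f m s ≤ b2 := hb2 ⟨m, s, hm, rfl⟩
  have h3 : watSum12 Λ f n t m s ≤ b3 := hb3 ⟨n, t, m, s, hn, hm, rfl⟩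
  have k1 : watSum1 Λ g n t ≤ c1 := hc1 ⟨n, t, hn, rfl⟩
  have k2 : watSum2 Λ g m s ≤ c2 := hc2 ⟨m, s, hm, rfl⟩
  have k3 : watSum12 Λ g n t m s ≤ c3 := hc3 ⟨n, t, m, s, hn, hm, rfl⟩
  have e1 := watSum1J_le_add Λ f g n t hd hΛ0
  have e2 := watSum2J_le_add Λ f g m s hd hΛ0
  have e3 := watSum12J_le_add Λ f g n t m s hd hΛ0
  unfold VLamPart
  linarith

lemma VLamPart_le_VLamJ (hb : BddAbove (watSetJ Λ f g)) {n : ℕ} {t : ℕ → ℝ} {m : ℕ}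
    {s : ℕ → ℝ} (hn : IsPartition n t) (hm : IsPartition m s) :
    VLamPart Λ f g n t m s ≤ VLamJ Λ f g :=
  le_csSup hb ⟨n, t, m, s, hn, hm, rfl⟩

lemma VLamJ_nonneg (hΛ0 : ∀ i j, 1 ≤ i → 1 ≤ j → 0 < Λ i j)
    (hb : BddAbove (watSetJ Λ f g)) : 0 ≤ VLamJ Λ f g :=
  le_trans (VLamPart_nonneg Λ f g 1 pTriv 1 pTriv hΛ0)
    (VLamPart_le_VLamJ Λ f g hb pTriv_part pTriv_part)

lemma term1_le (hΛ0 : ∀ i j, 1 ≤ i → 1 ≤ j → 0 < Λ i j) {x : ℝ} (h0 : 0 < x) (h1 : x ≤ 1) :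
    Λ 1 1 * dist (f x 0 + g 0 0) (f 0 0 + g x 0) ≤ watSum1J Λ f g (nOf x) (pOf x) := by
  have h := Finset.single_le_sum (f := fun i => Λ (i + 1) 1 *
      dist (f (pOf x (i + 1)) 0 + g (pOf x i) 0) (f (pOf x i) 0 + g (pOf x (i + 1)) 0))
    (fun i _ => mul_nonneg (lam_nonneg Λ hΛ0 i 0) dist_nonneg)
    (Finset.mem_range.mpr (show 0 < nOf x by unfold nOf; split <;> norm_num))
  unfold watSum1J
  simpa [pOf] using h

lemma term2_le (hΛ0 : ∀ i j, 1 ≤ i → 1 ≤ j → 0 < Λ i j) {y : ℝ} (h0 : 0 < y) (h1 : y ≤ 1) :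
    Λ 1 1 * dist (f 0 y + g 0 0) (f 0 0 + g 0 y) ≤ watSum2J Λ f g (nOf y) (pOf y) := by
  have h := Finset.single_le_sum (f := fun j => Λ 1 (j + 1) *
      dist (f 0 (pOf y (j + 1)) + g 0 (pOf y j)) (f 0 (pOf y j) + g 0 (pOf y (j + 1))))
    (fun j _ => mul_nonneg (lam_nonneg Λ hΛ0 0 j) dist_nonneg)
    (Finset.mem_range.mpr (show 0 < nOf y by unfold nOf; split <;> norm_num))
  unfold watSum2J
  simpa [pOf] using h

lemma term12_le (hΛ0 : ∀ i j, 1 ≤ i → 1 ≤ j → 0 < Λ i j) {x y : ℝ}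
    (hx0 : 0 < x) (hx1 : x ≤ 1) (hy0 : 0 < y) (hy1 : y ≤ 1) :
    Λ 1 1 * dist (f x y + f 0 0 + g x 0 + g 0 y) (g x y + g 0 0 + f x 0 + f 0 y)
      ≤ watSum12J Λ f g (nOf x) (pOf x) (nOf y) (pOf y) := by
  unfold watSum12J
  refine le_trans ?_ (Finset.single_le_sum
    (f := fun j => ∑ i ∈ range (nOf x), Λ (i + 1) (j + 1) *
      dist (f (pOf x (i + 1)) (pOf y (j + 1)) + f (pOf x i) (pOf y j)
              + g (pOf x (i + 1)) (pOf y j) + g (pOf x i) (pOf y (j + 1)))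
           (g (pOf x (i + 1)) (pOf y (j + 1)) + g (pOf x i) (pOf y j)
              + f (pOf x (i + 1)) (pOf y j) + f (pOf x i) (pOf y (j + 1))))
    (fun j _ => Finset.sum_nonneg fun i _ => mul_nonneg (lam_nonneg Λ hΛ0 i j) dist_nonneg)
    (Finset.mem_range.mpr (show 0 < nOf y by unfold nOf; split <;> norm_num)))
  refine le_trans ?_ (Finset.single_le_sum
    (f := fun i => Λ (i + 1) (0 + 1) *
      dist (f (pOf x (i + 1)) (pOf y (0 + 1)) + f (pOf x i) (pOf y 0)
              + g (pOf x (i + 1)) (pOf y 0) + g (pOf x i) (pOf y (0 + 1)))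
           (g (pOf x (i + 1)) (pOf y (0 + 1)) + g (pOf x i) (pOf y 0)
              + f (pOf x (i + 1)) (pOf y 0) + f (pOf x i) (pOf y (0 + 1))))
    (fun i _ => mul_nonneg (lam_nonneg Λ hΛ0 i 0) dist_nonneg)
    (Finset.mem_range.mpr (show 0 < nOf x by unfold nOf; split <;> norm_num)))
  simp [pOf]

lemma dist_pt_le (hd : ∀ u v w : M, dist (u + w) (v + w) = dist u v)
    (hΛ0 : ∀ i j, 1 ≤ i → 1 ≤ j → 0 < Λ i j)
    (hb : BddAbove (watSetJ Λ f g)) {x y : ℝ}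
    (hx : x ∈ Set.Icc (0:ℝ) 1) (hy : y ∈ Set.Icc (0:ℝ) 1) :
    dist (f x y) (g x y) ≤ (3 / Λ 1 1 + 3) * rhoLam Λ f g := by
  have hL : 0 < Λ 1 1 := hΛ0 1 1 le_rfl le_rfl
  set L := Λ 1 1 with hLdef
  set V := VLamJ Λ f g with hVdef
  set D := dist (f 0 0) (g 0 0) with hDdef
  have hD0 : 0 ≤ D := dist_nonneg
  have hV0 : 0 ≤ V := VLamJ_nonneg Λ f g hΛ0 hb
  have hVL0 : 0 ≤ V / L := div_nonneg hV0 hL.le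
  have hrho : rhoLam Λ f g = D + V := rfl
  have hfinal : 3 * (V / L) + 3 * D ≤ (3 / L + 3) * rhoLam Λ f g := by
    have hL' : L ≠ 0 := ne_of_gt hL
    have key : (3 / L + 3) * (D + V) = 3 * (D / L) + 3 * (V / L) + 3 * D + 3 * V := by
      field_simp
      ring
    rw [hrho, key]
    have := div_nonneg hD0 hL.le
    linarith
  -- edge bounds
  have hA : ∀ z ∈ Set.Icc (0:ℝ) 1, dist (f z 0 + g 0 0) (f 0 0 + g z 0) ≤ V / L := by
    intro z hz
    rcases eq_or_lt_of_le hz.1 with heq | hpos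
    · rw [← heq]
      simpa using hVL0
    · have h1 := term1_le Λ f g hΛ0 hpos hz.2
      have h2 : watSum1J Λ f g (nOf z) (pOf z) ≤ VLamPart Λ f g (nOf z) (pOf z) 1 pTriv := by
        have n2 := watSum2J_nonneg Λ f g 1 pTriv hΛ0
        have n3 := watSum12J_nonneg Λ f g (nOf z) (pOf z) 1 pTriv hΛ0
        unfold VLamPart; linarith
      have h3 := VLamPart_le_VLamJ Λ f g hb (pOf_part hpos hz.2) pTriv_part
      rw [le_div_iff₀ hL, mul_comm]
      linarith
  have hB : ∀ z ∈ Set.Icc (0:ℝ) 1, dist (f 0 z + g 0 0) (f 0 0 + g 0 z) ≤ V / L := by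
    intro z hz
    rcases eq_or_lt_of_le hz.1 with heq | hpos
    · rw [← heq]
      simpa using hVL0
    · have h1 := term2_le Λ f g hΛ0 hpos hz.2
      have h2 : watSum2J Λ f g (nOf z) (pOf z) ≤ VLamPart Λ f g 1 pTriv (nOf z) (pOf z) := by
        have n1 := watSum1J_nonneg Λ f g 1 pTriv hΛ0
        have n3 := watSum12J_nonneg Λ f g 1 pTriv (nOf z) (pOf z) hΛ0
        unfold VLamPart; linarith
      have h3 := VLamPart_le_VLamJ Λ f g hb pTriv_part (pOf_part hpos hz.2)
      rw [le_div_iff₀ hL, mul_comm]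
      linarith
  have hA' : ∀ z ∈ Set.Icc (0:ℝ) 1, dist (f z 0) (g z 0) ≤ V / L + D := by
    intro z hz
    have h := hA z hz
    have e2 : dist (f 0 0 + g z 0) (g z 0 + g 0 0) = D := by
      rw [show g z 0 + g 0 0 = g 0 0 + g z 0 by ac_rfl, hd (f 0 0) (g 0 0) (g z 0)]
    calc dist (f z 0) (g z 0) = dist (f z 0 + g 0 0) (g z 0 + g 0 0) := (hd _ _ _).symm
      _ ≤ dist (f z 0 + g 0 0) (f 0 0 + g z 0) + dist (f 0 0 + g z 0) (g z 0 + g 0 0) :=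
          dist_triangle _ _ _
      _ ≤ V / L + D := by rw [e2]; linarith
  have hB' : ∀ z ∈ Set.Icc (0:ℝ) 1, dist (f 0 z) (g 0 z) ≤ V / L + D := by
    intro z hz
    have h := hB z hz
    have e2 : dist (f 0 0 + g 0 z) (g 0 z + g 0 0) = D := by
      rw [show g 0 z + g 0 0 = g 0 0 + g 0 z by ac_rfl, hd (f 0 0) (g 0 0) (g 0 z)]
    calc dist (f 0 z) (g 0 z) = dist (f 0 z + g 0 0) (g 0 z + g 0 0) := (hd _ _ _).symm
      _ ≤ dist (f 0 z + g 0 0) (f 0 0 + g 0 z) + dist (f 0 0 + g 0 z) (g 0 z + g 0 0) :=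
          dist_triangle _ _ _
      _ ≤ V / L + D := by rw [e2]; linarith
  rcases eq_or_lt_of_le hx.1 with hxe | hx0
  · rw [← hxe]
    have := hB' y hy
    refine le_trans this (le_trans ?_ hfinal)
    linarith
  rcases eq_or_lt_of_le hy.1 with hye | hy0
  · rw [← hye]
    have := hA' x hx
    refine le_trans this (le_trans ?_ hfinal)
    linarith
  -- interior
  have hI : dist (f x y + f 0 0 + g x 0 + g 0 y) (g x y + g 0 0 + f x 0 + f 0 y) ≤ V / L := by
    have h1 := term12_le Λ f g hΛ0 hx0 hx.2 hy0 hy.2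
    have h2 : watSum12J Λ f g (nOf x) (pOf x) (nOf y) (pOf y)
        ≤ VLamPart Λ f g (nOf x) (pOf x) (nOf y) (pOf y) := by
      have n1 := watSum1J_nonneg Λ f g (nOf x) (pOf x) hΛ0
      have n2 := watSum2J_nonneg Λ f g (nOf y) (pOf y) hΛ0
      unfold VLamPart; linarith
    have h3 := VLamPart_le_VLamJ Λ f g hb (pOf_part hx0 hx.2) (pOf_part hy0 hy.2)
    rw [le_div_iff₀ hL, mul_comm]
    linarith
  have hrest : dist (g 0 0 + f x 0 + f 0 y) (f 0 0 + g x 0 + g 0 y)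
      ≤ D + (V / L + D) + (V / L + D) := by
    have e1 : dist (g 0 0 + f x 0 + f 0 y) (f 0 0 + g x 0 + g 0 y)
        ≤ dist (g 0 0 + f x 0) (f 0 0 + g x 0) + dist (f 0 y) (g 0 y) :=
      dist_add_add hd _ _ _ _
    have e2 : dist (g 0 0 + f x 0) (f 0 0 + g x 0) ≤ dist (g 0 0) (f 0 0) + dist (f x 0) (g x 0) :=
      dist_add_add hd _ _ _ _
    have e3 : dist (g 0 0) (f 0 0) = D := dist_comm _ _
    have e4 := hA' x hx
    have e5 := hB' y hy
    linarith
  have step : dist (f x y) (g x y) ≤ V / L + (D + (V / L + D) + (V / L + D)) := by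
    have e1 : dist (f x y) (g x y)
        = dist (f x y + (f 0 0 + g x 0 + g 0 y)) (g x y + (f 0 0 + g x 0 + g 0 y)) :=
      (hd _ _ _).symm
    rw [e1]
    refine le_trans (dist_triangle _ (g x y + g 0 0 + f x 0 + f 0 y) _) ?_
    have p1 : dist (f x y + (f 0 0 + g x 0 + g 0 y)) (g x y + g 0 0 + f x 0 + f 0 y)
        ≤ V / L := by
      refine le_trans (le_of_eq ?_) hI
      congr 1
      ac_rfl
    have p2 : dist (g x y + g 0 0 + f x 0 + f 0 y) (g x y + (f 0 0 + g x 0 + g 0 y))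
        = dist (g 0 0 + f x 0 + f 0 y) (f 0 0 + g x 0 + g 0 y) := by
      rw [show g x y + g 0 0 + f x 0 + f 0 y = g x y + (g 0 0 + f x 0 + f 0 y) by ac_rfl,
        hd' hd _ _ _]
    rw [p2]
    linarith
  refine le_trans step (le_trans ?_ hfinal)
  linarith

end Sup

section Lim

lemma tendsto_dist_lim {X Y : ℕ → M} {Xl Yl : M}
    (hX : Filter.Tendsto (fun v => dist (X v) Xl) Filter.atTop (nhds 0))
    (hY : Filter.Tendsto (fun v => dist (Y v) Yl) Filter.atTop (nhds 0)) :
    Filter.Tendsto (fun v => dist (X v) (Y v)) Filter.atTop (nhds (dist Xl Yl)) := by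
  rw [← tendsto_sub_nhds_zero_iff]
  refine squeeze_zero_norm (fun v => ?_) (by simpa using hX.add hY)
  have h := dist_dist_dist_le (X v) (Y v) Xl Yl
  rw [Real.dist_eq] at h
  rw [Real.norm_eq_abs]
  exact h

lemma tendsto_one_move (hd : ∀ u v w : M, dist (u + w) (v + w) = dist u v) (c : M)
    {p : ℕ → M} {pl : M}
    (hp : Filter.Tendsto (fun v => dist (p v) pl) Filter.atTop (nhds 0)) :
    Filter.Tendsto (fun v => dist (c + p v) (c + pl)) Filter.atTop (nhds 0) := by
  have e : ∀ v, dist (c + p v) (c + pl) = dist (p v) pl := fun v => hd' hd _ _ _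
  simpa [e] using hp

lemma tendsto_two_move (hd : ∀ u v w : M, dist (u + w) (v + w) = dist u v) (c : M)
    {p q : ℕ → M} {pl ql : M}
    (hp : Filter.Tendsto (fun v => dist (p v) pl) Filter.atTop (nhds 0))
    (hq : Filter.Tendsto (fun v => dist (q v) ql) Filter.atTop (nhds 0)) :
    Filter.Tendsto (fun v => dist (p v + q v + c) (pl + ql + c)) Filter.atTop (nhds 0) := by
  refine squeeze_zero (fun v => dist_nonneg) (fun v => ?_) (by simpa using hp.add hq)
  calc dist (p v + q v + c) (pl + ql + c) = dist (p v + q v) (pl + ql) := hd _ _ _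
    _ ≤ dist (p v) pl + dist (q v) ql := dist_add_add hd _ _ _ _

lemma tendsto_move12a (hd : ∀ u v w : M, dist (u + w) (v + w) = dist u v) (c1 c2 : M)
    {p q : ℕ → M} {pl ql : M}
    (hp : Filter.Tendsto (fun v => dist (p v) pl) Filter.atTop (nhds 0))
    (hq : Filter.Tendsto (fun v => dist (q v) ql) Filter.atTop (nhds 0)) :
    Filter.Tendsto (fun v => dist (c1 + c2 + p v + q v) (c1 + c2 + pl + ql))
      Filter.atTop (nhds 0) := by
  have e : ∀ u w : M, c1 + c2 + u + w = u + w + (c1 + c2) := fun u w => by ac_rfl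
  simp only [e]
  exact tendsto_two_move hd _ hp hq

lemma tendsto_move12b (hd : ∀ u v w : M, dist (u + w) (v + w) = dist u v) (c1 c2 : M)
    {p q : ℕ → M} {pl ql : M}
    (hp : Filter.Tendsto (fun v => dist (p v) pl) Filter.atTop (nhds 0))
    (hq : Filter.Tendsto (fun v => dist (q v) ql) Filter.atTop (nhds 0)) :
    Filter.Tendsto (fun v => dist (p v + q v + c1 + c2) (pl + ql + c1 + c2))
      Filter.atTop (nhds 0) := by
  have e : ∀ u w : M, u + w + c1 + c2 = u + w + (c1 + c2) := fun u w => by ac_rfl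
  simp only [e]
  exact tendsto_two_move hd _ hp hq

lemma tendsto_VLamPart (hd : ∀ u v w : M, dist (u + w) (v + w) = dist u v)
    (g : ℝ → ℝ → M) (F : ℕ → ℝ → ℝ → M) (f : ℝ → ℝ → M)
    (hf : ∀ x ∈ Set.Icc (0:ℝ) 1, ∀ y ∈ Set.Icc (0:ℝ) 1,
      Filter.Tendsto (fun v => dist (F v x y) (f x y)) Filter.atTop (nhds 0))
    {n : ℕ} {t : ℕ → ℝ} {m : ℕ} {s : ℕ → ℝ} (hn : IsPartition n t) (hm : IsPartition m s) :
    Filter.Tendsto (fun v => VLamPart Λ g (F v) n t m s) Filter.atTop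
      (nhds (VLamPart Λ g f n t m s)) := by
  have h01 : (0:ℝ) ∈ Set.Icc (0:ℝ) 1 := by norm_num
  unfold VLamPart watSum1J watSum2J watSum12J
  refine Filter.Tendsto.add (Filter.Tendsto.add ?_ ?_) ?_
  · refine tendsto_finset_sum _ fun i hi => ?_
    have hti : t i ∈ Set.Icc (0:ℝ) 1 := isPartition_mem hn (Finset.mem_range.mp hi).le
    have hti1 : t (i+1) ∈ Set.Icc (0:ℝ) 1 := isPartition_mem hn (Finset.mem_range.mp hi)
    exact Filter.Tendsto.const_mul _ (tendsto_dist_lim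
      (tendsto_one_move hd _ (hf _ hti _ h01)) (tendsto_one_move hd _ (hf _ hti1 _ h01)))
  · refine tendsto_finset_sum _ fun j hj => ?_
    have hsj : s j ∈ Set.Icc (0:ℝ) 1 := isPartition_mem hm (Finset.mem_range.mp hj).le
    have hsj1 : s (j+1) ∈ Set.Icc (0:ℝ) 1 := isPartition_mem hm (Finset.mem_range.mp hj)
    exact Filter.Tendsto.const_mul _ (tendsto_dist_lim
      (tendsto_one_move hd _ (hf _ h01 _ hsj)) (tendsto_one_move hd _ (hf _ h01 _ hsj1)))
  · refine tendsto_finset_sum _ fun j hj => tendsto_finset_sum _ fun i hi => ?_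
    have hti : t i ∈ Set.Icc (0:ℝ) 1 := isPartition_mem hn (Finset.mem_range.mp hi).le
    have hti1 : t (i+1) ∈ Set.Icc (0:ℝ) 1 := isPartition_mem hn (Finset.mem_range.mp hi)
    have hsj : s j ∈ Set.Icc (0:ℝ) 1 := isPartition_mem hm (Finset.mem_range.mp hj).le
    have hsj1 : s (j+1) ∈ Set.Icc (0:ℝ) 1 := isPartition_mem hm (Finset.mem_range.mp hj)
    exact Filter.Tendsto.const_mul _ (tendsto_dist_lim
      (tendsto_move12a hd _ _ (hf _ hti1 _ hsj) (hf _ hti _ hsj1))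
      (tendsto_move12b hd _ _ (hf _ hti1 _ hsj1) (hf _ hti _ hsj)))

end Lim

end Mid

/-- For a complete metric semigroup `M` and a bivariate Waterman sequence `Λ`, the
bivariate Waterman bounded variation space `(ΛBV(I×I, M), ρ_Λ)` is a complete
metric space. -/
theorem LamBV_complete_metric [CompleteSpace M] (Λ : ℕ → ℕ → ℝ)
    (hΛ : IsWatermanSeq Λ)
    (hd : ∀ u v w : M, dist (u + w) (v + w) = dist u v) :
    (∀ f g : ℝ → ℝ → M, MemLamBV Λ f → MemLamBV Λ g →
      (rhoLam Λ f g = 0 ↔ ∀ t ∈ Set.Icc (0:ℝ) 1, ∀ s ∈ Set.Icc (0:ℝ) 1, f t s = g t s))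
    ∧ (∀ f g : ℝ → ℝ → M, MemLamBV Λ f → MemLamBV Λ g → rhoLam Λ f g = rhoLam Λ g f)
    ∧ (∀ f g h : ℝ → ℝ → M, MemLamBV Λ f → MemLamBV Λ g → MemLamBV Λ h →
        rhoLam Λ f g ≤ rhoLam Λ f h + rhoLam Λ h g)
    ∧ (∀ F : ℕ → ℝ → ℝ → M, (∀ u, MemLamBV Λ (F u)) →
        (∀ ε > (0:ℝ), ∃ N, ∀ u ≥ N, ∀ v ≥ N, rhoLam Λ (F u) (F v) < ε) →
        ∃ f : ℝ → ℝ → M, MemLamBV Λ f ∧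
          Filter.Tendsto (fun u => rhoLam Λ (F u) f) Filter.atTop (nhds 0)) := by
  obtain ⟨hΛ0, -, -, -, -⟩ := hΛ
  have hL : 0 < Λ 1 1 := hΛ0 1 1 le_rfl le_rfl
  have hC : 0 < 3 / Λ 1 1 + 3 := by positivity
  refine ⟨?_, ?_, ?_, ?_⟩
  · -- separation
    intro f g hf hg
    have hb := bddAbove_watSetJ Λ f g hd hΛ0 hf hg
    constructor
    · intro h0 x hx y hy
      have hle := dist_pt_le Λ f g hd hΛ0 hb hx hy
      rw [h0, mul_zero] at hle
      exact dist_le_zero.mp hle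
    · intro heq
      have h00 : dist (f 0 0) (g 0 0) = 0 := by
        rw [heq 0 (by norm_num) 0 (by norm_num)]
        exact dist_self _
      have hset : ∀ x ∈ watSetJ Λ f g, x = (0:ℝ) := by
        rintro x ⟨n, t, m, s, hn, hm, rfl⟩
        have h01 : (0:ℝ) ∈ Set.Icc (0:ℝ) 1 := by norm_num
        have e1 : watSum1J Λ f g n t = 0 := Finset.sum_eq_zero fun i hi => by
          have hti := isPartition_mem hn (Finset.mem_range.mp hi).le
          have hti1 := isPartition_mem hn (Finset.mem_range.mp hi)
          have e : f (t (i+1)) 0 + g (t i) 0 = f (t i) 0 + g (t (i+1)) 0 := by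
            rw [heq _ hti1 _ h01, heq _ hti _ h01]
            ac_rfl
          rw [e, dist_self, mul_zero]
        have e2 : watSum2J Λ f g m s = 0 := Finset.sum_eq_zero fun j hj => by
          have hsj := isPartition_mem hm (Finset.mem_range.mp hj).le
          have hsj1 := isPartition_mem hm (Finset.mem_range.mp hj)
          have e : f 0 (s (j+1)) + g 0 (s j) = f 0 (s j) + g 0 (s (j+1)) := by
            rw [heq _ h01 _ hsj1, heq _ h01 _ hsj]
            ac_rfl
          rw [e, dist_self, mul_zero]
        have e3 : watSum12J Λ f g n t m s = 0 := Finset.sum_eq_zero fun j hj =>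
          Finset.sum_eq_zero fun i hi => by
          have hti := isPartition_mem hn (Finset.mem_range.mp hi).le
          have hti1 := isPartition_mem hn (Finset.mem_range.mp hi)
          have hsj := isPartition_mem hm (Finset.mem_range.mp hj).le
          have hsj1 := isPartition_mem hm (Finset.mem_range.mp hj)
          have e : f (t (i+1)) (s (j+1)) + f (t i) (s j) + g (t (i+1)) (s j) + g (t i) (s (j+1))
              = g (t (i+1)) (s (j+1)) + g (t i) (s j) + f (t (i+1)) (s j) + f (t i) (s (j+1)) := by
            rw [heq _ hti1 _ hsj1, heq _ hti _ hsj, heq _ hti1 _ hsj, heq _ hti _ hsj1]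
          rw [e, dist_self, mul_zero]
        unfold VLamPart
        rw [e1, e2, e3]
        ring
      have hmem0 : (0:ℝ) ∈ watSetJ Λ f g := by
        have hm : VLamPart Λ f g 1 pTriv 1 pTriv ∈ watSetJ Λ f g :=
          ⟨1, pTriv, 1, pTriv, pTriv_part, pTriv_part, rfl⟩
        have := hset _ hm
        rwa [this] at hm
      have hsing : watSetJ Λ f g = {(0:ℝ)} := by
        apply Set.eq_singleton_iff_unique_mem.mpr
        exact ⟨hmem0, fun x hx => hset x hx⟩
      show dist (f 0 0) (g 0 0) + VLamJ Λ f g = 0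
      unfold VLamJ
      rw [h00, hsing, csSup_singleton]
      ring
  · -- symmetry
    intro f g _ _
    unfold rhoLam
    rw [dist_comm, VLamJ_symm]
  · -- triangle
    intro f g h hf hg hh
    have hbfh := bddAbove_watSetJ Λ f h hd hΛ0 hf hh
    have hbhg := bddAbove_watSetJ Λ h g hd hΛ0 hh hg
    have hV : VLamJ Λ f g ≤ VLamJ Λ f h + VLamJ Λ h g := by
      refine Real.sSup_le ?_
        (add_nonneg (VLamJ_nonneg Λ f h hΛ0 hbfh) (VLamJ_nonneg Λ h g hΛ0 hbhg))
      rintro x ⟨n, t, m, s, hn, hm, rfl⟩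
      have h0 := VLamPart_tri Λ f g h n t m s hd hΛ0
      have h1 := VLamPart_le_VLamJ Λ f h hbfh hn hm
      have h2 := VLamPart_le_VLamJ Λ h g hbhg hn hm
      linarith
    have hD := dist_triangle (f 0 0) (h 0 0) (g 0 0)
    unfold rhoLam
    linarith
  · -- completeness
    intro F hFBV hcau
    set C := 3 / Λ 1 1 + 3 with hCdef
    set proj : ℝ → ℝ := fun x => max 0 (min 1 x) with hproj
    have hprojmem : ∀ x, proj x ∈ Set.Icc (0:ℝ) 1 :=
      fun x => ⟨le_max_left _ _, max_le (by norm_num) (min_le_left _ _)⟩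
    have hprojid : ∀ x ∈ Set.Icc (0:ℝ) 1, proj x = x := fun x hx => by
      simp only [hproj]
      rw [min_eq_right hx.2, max_eq_right hx.1]
    have hdistptFF : ∀ u v, ∀ x y : ℝ,
        dist (F u (proj x) (proj y)) (F v (proj x) (proj y)) ≤ C * rhoLam Λ (F u) (F v) :=
      fun u v x y => dist_pt_le Λ (F u) (F v) hd hΛ0
        (bddAbove_watSetJ Λ _ _ hd hΛ0 (hFBV u) (hFBV v)) (hprojmem x) (hprojmem y)
    have hcauchy : ∀ x y : ℝ, CauchySeq (fun u => F u (proj x) (proj y)) := by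
      intro x y
      rw [Metric.cauchySeq_iff]
      intro ε hε
      obtain ⟨N, hN⟩ := hcau (ε / C) (div_pos hε hC)
      refine ⟨N, fun u hu v hv => lt_of_le_of_lt (hdistptFF u v x y) ?_⟩
      calc C * rhoLam Λ (F u) (F v) < C * (ε / C) :=
            mul_lt_mul_of_pos_left (hN u hu v hv) hC
        _ = ε := by field_simp
    have hex : ∀ x y : ℝ, ∃ a : M,
        Filter.Tendsto (fun u => F u (proj x) (proj y)) Filter.atTop (nhds a) :=
      fun x y => cauchySeq_tendsto_of_complete (hcauchy x y)
    choose f hf using hex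
    have hfsq : ∀ x ∈ Set.Icc (0:ℝ) 1, ∀ y ∈ Set.Icc (0:ℝ) 1,
        Filter.Tendsto (fun u => dist (F u x y) (f x y)) Filter.atTop (nhds 0) := by
      intro x hx y hy
      have h0 := hf x y
      rw [hprojid x hx, hprojid y hy] at h0
      exact tendsto_iff_dist_tendsto_zero.mp h0
    have key : ∀ ε > (0:ℝ), ∃ N : ℕ, ∀ u ≥ N,
        (∀ n t m s, IsPartition n t → IsPartition m s →
          VLamPart Λ (F u) f n t m s ≤ ε)
        ∧ dist (F u 0 0) (f 0 0) ≤ ε := by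
      intro ε hε
      obtain ⟨N, hN⟩ := hcau ε hε
      refine ⟨N, fun u hu => ⟨?_, ?_⟩⟩
      · intro n t m s hn hm
        have hlim := tendsto_VLamPart Λ hd (F u) F f hfsq hn hm
        refine le_of_tendsto hlim ?_
        rw [Filter.eventually_atTop]
        refine ⟨N, fun v hv => ?_⟩
        have h1 : VLamPart Λ (F u) (F v) n t m s ≤ VLamJ Λ (F u) (F v) :=
          VLamPart_le_VLamJ Λ _ _ (bddAbove_watSetJ Λ _ _ hd hΛ0 (hFBV u) (hFBV v)) hn hm
        have h2 : VLamJ Λ (F u) (F v) ≤ rhoLam Λ (F u) (F v) :=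
          le_add_of_nonneg_left dist_nonneg
        linarith [hN u hu v hv]
      · have h01 : (0:ℝ) ∈ Set.Icc (0:ℝ) 1 := by norm_num
        have hX : Filter.Tendsto (fun _ : ℕ => dist (F u 0 0) (F u 0 0))
            Filter.atTop (nhds 0) := by
          simp only [dist_self]
          exact tendsto_const_nhds
        have hlim : Filter.Tendsto (fun v => dist (F u 0 0) (F v 0 0)) Filter.atTop
            (nhds (dist (F u 0 0) (f 0 0))) :=
          tendsto_dist_lim hX (hfsq 0 h01 0 h01)
        refine le_of_tendsto hlim ?_
        rw [Filter.eventually_atTop]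
        refine ⟨N, fun v hv => ?_⟩
        have h2 : dist (F u 0 0) (F v 0 0) ≤ rhoLam Λ (F u) (F v) :=
          le_add_of_nonneg_right (VLamJ_nonneg Λ _ _ hΛ0
            (bddAbove_watSetJ Λ _ _ hd hΛ0 (hFBV u) (hFBV v)))
        linarith [hN u hu v hv]
    -- f has bounded variation
    obtain ⟨N1, hN1⟩ := key 1 one_pos
    have hJbound : ∀ n t m s, IsPartition n t → IsPartition m s →
        VLamPart Λ f (F N1) n t m s ≤ 1 := by
      intro n t m s hn hm
      rw [VLamPart_symm]
      exact (hN1 N1 le_rfl).1 n t m s hn hm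
    obtain ⟨⟨b1, hb1⟩, ⟨b2, hb2⟩, ⟨b3, hb3⟩⟩ := hFBV N1
    have hmem : MemLamBV Λ f := by
      refine ⟨⟨1 + b1, ?_⟩, ⟨1 + b2, ?_⟩, ⟨1 + b3, ?_⟩⟩
      · rintro x ⟨n, t, hn, rfl⟩
        have h1 := watSum1_le_J Λ f (F N1) n t hd hΛ0
        have h2 : watSum1J Λ f (F N1) n t ≤ 1 := by
          have hh := hJbound n t 1 pTriv hn pTriv_part
          have n2 := watSum2J_nonneg Λ f (F N1) 1 pTriv hΛ0
          have n3 := watSum12J_nonneg Λ f (F N1) n t 1 pTriv hΛ0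
          unfold VLamPart at hh
          linarith
        have h3 : watSum1 Λ (F N1) n t ≤ b1 := hb1 ⟨n, t, hn, rfl⟩
        linarith
      · rintro x ⟨m, s, hm, rfl⟩
        have h1 := watSum2_le_J Λ f (F N1) m s hd hΛ0
        have h2 : watSum2J Λ f (F N1) m s ≤ 1 := by
          have hh := hJbound 1 pTriv m s pTriv_part hm
          have n1 := watSum1J_nonneg Λ f (F N1) 1 pTriv hΛ0
          have n3 := watSum12J_nonneg Λ f (F N1) 1 pTriv m s hΛ0
          unfold VLamPart at hh
          linarith
        have h3 : watSum2 Λ (F N1) m s ≤ b2 := hb2 ⟨m, s, hm, rfl⟩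
        linarith
      · rintro x ⟨n, t, m, s, hn, hm, rfl⟩
        have h1 := watSum12_le_J Λ f (F N1) n t m s hd hΛ0
        have h2 : watSum12J Λ f (F N1) n t m s ≤ 1 := by
          have hh := hJbound n t m s hn hm
          have n1 := watSum1J_nonneg Λ f (F N1) n t hΛ0
          have n2 := watSum2J_nonneg Λ f (F N1) m s hΛ0
          unfold VLamPart at hh
          linarith
        have h3 : watSum12 Λ (F N1) n t m s ≤ b3 := hb3 ⟨n, t, m, s, hn, hm, rfl⟩
        linarith
    refine ⟨f, hmem, ?_⟩
    rw [Metric.tendsto_atTop]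
    intro ε hε
    obtain ⟨N, hN⟩ := key (ε / 3) (by positivity)
    refine ⟨N, fun u hu => ?_⟩
    obtain ⟨hVp, hd00⟩ := hN u hu
    have hbJ : BddAbove (watSetJ Λ (F u) f) := by
      refine ⟨ε / 3, ?_⟩
      rintro x ⟨n, t, m, s, hn, hm, rfl⟩
      exact hVp n t m s hn hm
    have hsup : VLamJ Λ (F u) f ≤ ε / 3 := by
      refine Real.sSup_le ?_ (by positivity)
      rintro x ⟨n, t, m, s, hn, hm, rfl⟩
      exact hVp n t m s hn hm
    have hge : 0 ≤ VLamJ Λ (F u) f := VLamJ_nonneg Λ (F u) f hΛ0 hbJ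
    have hr0 : (0:ℝ) ≤ rhoLam Λ (F u) f := by
      unfold rhoLam
      exact add_nonneg dist_nonneg hge
    have habs : dist (rhoLam Λ (F u) f) 0 = rhoLam Λ (F u) f := by
      rw [Real.dist_eq, sub_zero]
      exact abs_of_nonneg hr0
    rw [habs]
    have : rhoLam Λ (F u) f = dist (F u 0 0) (f 0 0) + VLamJ Λ (F u) f := rfl
    rw [this]
    linarith
end

section
/- Let (M,d,+) be a complete metric semigroup and Λ = {λ_{i,j}} a bivariate Waterman sequence. A set A ⊆ ΛBV(I×I,M) is precompact if (i) A is joint equivariated: for every ε>0 there exist partitions Π_ε and Π*_ε such that V_Λ(f,g) ≤ ε + V_Λ(f,g,Π_ε×Π*_ε) for all f,g ∈ A; and (ii) for every t,s ∈ [0,1], the set {f(t,s) : f ∈ A} is precompact in M. -/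
open Finset

variable {M : Type*} [MetricSpace M] [AddCommSemigroup M]

lemma dist_add_add_le' (hd : ∀ u v w : M, dist (u + w) (v + w) = dist u v)
    (a b c d' : M) : dist (a + b) (c + d') ≤ dist a c + dist b d' := by
  calc dist (a + b) (c + d') ≤ dist (a + b) (c + b) + dist (c + b) (c + d') :=
        dist_triangle _ _ _
    _ = dist a c + dist b d' := by
        rw [hd, add_comm c b, add_comm c d', hd]

lemma partition_mem_Icc {n : ℕ} {t : ℕ → ℝ} (h : IsPartition n t) :
    ∀ i ≤ n, t i ∈ Set.Icc (0:ℝ) 1 := by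
  obtain ⟨hn, h0, h1, hlt⟩ := h
  have key : ∀ j, j ≤ n → ∀ i ≤ j, t i ≤ t j := by
    intro j
    induction j with
    | zero => intro _ i hi; simp [Nat.le_zero.mp hi]
    | succ k ih =>
      intro hjn i hi
      rcases Nat.lt_or_ge i (k+1) with h' | h'
      · exact le_trans (ih (le_trans (Nat.le_succ k) hjn) i (Nat.lt_succ_iff.mp h'))
          (le_of_lt (hlt k (Nat.lt_of_succ_le hjn)))
      · have : i = k+1 := le_antisymm hi h'
        simp [this]
  intro i hi
  exact ⟨h0 ▸ key i hi 0 (Nat.zero_le i), h1 ▸ key n le_rfl i hi⟩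


lemma dist_add4' (hd : ∀ u v w : M, dist (u + w) (v + w) = dist u v)
    (a b c d' a' b' c' d'' : M) :
    dist (a + b + c + d') (a' + b' + c' + d'') ≤
      dist a a' + dist b b' + dist c c' + dist d' d'' := by
  calc dist (a + b + c + d') (a' + b' + c' + d'')
      ≤ dist (a + b + c) (a' + b' + c') + dist d' d'' := dist_add_add_le' hd _ _ _ _
    _ ≤ (dist (a + b) (a' + b') + dist c c') + dist d' d'' := by
        have := dist_add_add_le' hd (a+b) c (a'+b') c'
        linarith
    _ ≤ ((dist a a' + dist b b') + dist c c') + dist d' d'' := by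
        have := dist_add_add_le' hd a b a' b'
        linarith
    _ = dist a a' + dist b b' + dist c c' + dist d' d'' := by ring

/-- Sufficient conditions for precompactness (total boundedness w.r.t. `ρ_Λ`)
of a set `A ⊆ ΛBV(I×I, M)`: (i) `A` is joint equivariated, and (ii) each
pointwise section `{f(t,s) : f ∈ A}` is precompact in `M`. -/
theorem LamBV_precompact [CompleteSpace M] (Λ : ℕ → ℕ → ℝ)
    (hΛ : IsWatermanSeq Λ)
    (hd : ∀ u v w : M, dist (u + w) (v + w) = dist u v)
    (A : Set (ℝ → ℝ → M)) (hA : ∀ f ∈ A, MemLamBV Λ f)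
    (hequi : ∀ ε > (0:ℝ), ∃ n t m s, IsPartition n t ∧ IsPartition m s ∧
      ∀ f ∈ A, ∀ g ∈ A, VLamJ Λ f g ≤ ε + VLamPart Λ f g n t m s)
    (hpt : ∀ t ∈ Set.Icc (0:ℝ) 1, ∀ s ∈ Set.Icc (0:ℝ) 1,
      IsCompact (closure {x : M | ∃ f ∈ A, f t s = x})) :
    ∀ ε > (0:ℝ), ∃ G : Set (ℝ → ℝ → M), G ⊆ A ∧ G.Finite ∧
      ∀ f ∈ A, ∃ g ∈ G, rhoLam Λ f g < ε := by
  intro ε hε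
  obtain ⟨n, t, m, s, hPt, hPs, hkey⟩ := hequi (ε/2) (by positivity)
  have hΛpos := hΛ.1
  set S1 : ℝ := ∑ i ∈ range n, Λ (i+1) 1 with hS1
  set S2 : ℝ := ∑ j ∈ range m, Λ 1 (j+1) with hS2
  set S12 : ℝ := ∑ j ∈ range m, ∑ i ∈ range n, Λ (i+1) (j+1) with hS12
  have hS1nn : 0 ≤ S1 := Finset.sum_nonneg fun i _ =>
    le_of_lt (hΛpos _ _ (Nat.le_add_left 1 i) le_rfl)
  have hS2nn : 0 ≤ S2 := Finset.sum_nonneg fun j _ =>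
    le_of_lt (hΛpos _ _ le_rfl (Nat.le_add_left 1 j))
  have hS12nn : 0 ≤ S12 := Finset.sum_nonneg fun j _ => Finset.sum_nonneg fun i _ =>
    le_of_lt (hΛpos _ _ (Nat.le_add_left 1 i) (Nat.le_add_left 1 j))
  set C : ℝ := S1 + S2 + S12 with hCdef
  have hCnn : 0 ≤ C := by positivity
  have hden : (0:ℝ) < 4 * (1 + 4 * C) := by nlinarith
  set δ : ℝ := ε / (4 * (1 + 4 * C)) with hδdef
  have hδpos : 0 < δ := div_pos hε hden
  have hδε : δ * (4 * (1 + 4 * C)) = ε := div_mul_cancel₀ ε (ne_of_gt hden)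
  -- the finite grid of points
  set Φ : (ℝ → ℝ → M) → (Fin (n+1) × Fin (m+1) → M) :=
    fun f p => f (t p.1) (s p.2) with hΦdef
  set S : Set (Fin (n+1) × Fin (m+1) → M) := Φ '' A with hSdef
  have hStb : TotallyBounded S := by
    have hK : IsCompact (Set.pi Set.univ
        (fun p : Fin (n+1) × Fin (m+1) =>
          closure {x : M | ∃ f ∈ A, f (t p.1) (s p.2) = x})) := by
      apply isCompact_univ_pi
      intro p
      exact hpt _ (partition_mem_Icc hPt p.1 (Nat.lt_succ_iff.mp p.1.2))
        _ (partition_mem_Icc hPs p.2 (Nat.lt_succ_iff.mp p.2.2))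
    apply TotallyBounded.subset _ hK.totallyBounded
    rintro _ ⟨f, hf, rfl⟩
    intro p _
    exact subset_closure ⟨f, hf, rfl⟩
  obtain ⟨T, hTS, hTfin, hcov⟩ := (totallyBounded_iff_subset.mp hStb)
    {q | dist q.1 q.2 < δ} (Metric.dist_mem_uniformity hδpos)
  choose g hgA hgΦ using fun y (hy : y ∈ T) => hTS hy
  have : Finite ↥T := hTfin.to_subtype
  refine ⟨Set.range (fun y : T => g y.1 y.2), ?_, Set.finite_range _, ?_⟩
  · rintro _ ⟨y, rfl⟩; exact hgA y.1 y.2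
  · intro f hf
    have hΦf : Φ f ∈ S := ⟨f, hf, rfl⟩
    obtain ⟨y, hyT, hy⟩ := Set.mem_iUnion₂.mp (hcov hΦf)
    refine ⟨g y hyT, ⟨⟨y, hyT⟩, rfl⟩, ?_⟩
    set g₀ := g y hyT with hg₀
    have hclose : ∀ i ≤ n, ∀ j ≤ m, dist (f (t i) (s j)) (g₀ (t i) (s j)) < δ := by
      intro i hi j hj
      have h1 := dist_le_pi_dist (Φ f) (Φ g₀)
        (⟨i, Nat.lt_succ_of_le hi⟩, ⟨j, Nat.lt_succ_of_le hj⟩)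
      have hy' : dist (Φ f) (Φ g₀) < δ := by rw [hg₀, hgΦ y hyT]; exact hy
      exact lt_of_le_of_lt h1 hy'
    have ht0 : t 0 = 0 := hPt.2.1
    have hs0 : s 0 = 0 := hPs.2.1
    have hclose' : ∀ i ≤ n, dist (f (t i) 0) (g₀ (t i) 0) < δ := by
      intro i hi
      have := hclose i hi 0 (Nat.zero_le m); rwa [hs0] at this
    have hclose'' : ∀ j ≤ m, dist (f 0 (s j)) (g₀ 0 (s j)) < δ := by
      intro j hj
      have := hclose 0 (Nat.zero_le n) j hj; rwa [ht0] at this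
    have h00 : dist (f 0 0) (g₀ 0 0) < δ := by
      have := hclose 0 (Nat.zero_le n) 0 (Nat.zero_le m); rwa [ht0, hs0] at this
    -- bound each joint sum
    have hb1 : watSum1J Λ f g₀ n t ≤ 2 * δ * S1 := by
      rw [hS1, Finset.mul_sum, watSum1J]
      apply Finset.sum_le_sum
      intro i hi
      rw [mul_comm (2*δ)]
      apply mul_le_mul_of_nonneg_left _ (le_of_lt (hΛpos _ _ (Nat.le_add_left 1 i) le_rfl))
      have h1 := hclose' (i+1) (Finset.mem_range.mp hi)
      have h2 := hclose' i (le_of_lt (Finset.mem_range.mp hi))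
      rw [dist_comm] at h2
      calc dist (f (t (i+1)) 0 + g₀ (t i) 0) (f (t i) 0 + g₀ (t (i+1)) 0)
          ≤ dist (f (t (i+1)) 0 + g₀ (t i) 0) (g₀ (t (i+1)) 0 + g₀ (t i) 0)
            + dist (g₀ (t (i+1)) 0 + g₀ (t i) 0) (f (t i) 0 + g₀ (t (i+1)) 0) :=
            dist_triangle _ _ _
        _ = dist (f (t (i+1)) 0) (g₀ (t (i+1)) 0) + dist (g₀ (t i) 0) (f (t i) 0) := by
            rw [hd, add_comm (g₀ (t (i+1)) 0) (g₀ (t i) 0), hd]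
        _ ≤ 2 * δ := by linarith
    have hb2 : watSum2J Λ f g₀ m s ≤ 2 * δ * S2 := by
      rw [hS2, Finset.mul_sum, watSum2J]
      apply Finset.sum_le_sum
      intro j hj
      rw [mul_comm (2*δ)]
      apply mul_le_mul_of_nonneg_left _ (le_of_lt (hΛpos _ _ le_rfl (Nat.le_add_left 1 j)))
      have h1 := hclose'' (j+1) (Finset.mem_range.mp hj)
      have h2 := hclose'' j (le_of_lt (Finset.mem_range.mp hj))
      rw [dist_comm] at h2
      calc dist (f 0 (s (j+1)) + g₀ 0 (s j)) (f 0 (s j) + g₀ 0 (s (j+1)))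
          ≤ dist (f 0 (s (j+1)) + g₀ 0 (s j)) (g₀ 0 (s (j+1)) + g₀ 0 (s j))
            + dist (g₀ 0 (s (j+1)) + g₀ 0 (s j)) (f 0 (s j) + g₀ 0 (s (j+1))) :=
            dist_triangle _ _ _
        _ = dist (f 0 (s (j+1))) (g₀ 0 (s (j+1))) + dist (g₀ 0 (s j)) (f 0 (s j)) := by
            rw [hd, add_comm (g₀ 0 (s (j+1))) (g₀ 0 (s j)), hd]
        _ ≤ 2 * δ := by linarith
    have hb12 : watSum12J Λ f g₀ n t m s ≤ 4 * δ * S12 := by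
      rw [hS12, Finset.mul_sum, watSum12J]
      apply Finset.sum_le_sum
      intro j hj
      rw [Finset.mul_sum]
      apply Finset.sum_le_sum
      intro i hi
      rw [mul_comm (4*δ)]
      apply mul_le_mul_of_nonneg_left _
        (le_of_lt (hΛpos _ _ (Nat.le_add_left 1 i) (Nat.le_add_left 1 j)))
      have hin := Finset.mem_range.mp hi
      have hjm := Finset.mem_range.mp hj
      have h1 := hclose (i+1) hin (j+1) hjm
      have h2 := hclose i (le_of_lt hin) j (le_of_lt hjm)
      have h3 := hclose (i+1) hin j (le_of_lt hjm)
      have h4 := hclose i (le_of_lt hin) (j+1) hjm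
      rw [dist_comm] at h3
      rw [dist_comm] at h4
      have := dist_add4' hd
        (f (t (i+1)) (s (j+1))) (f (t i) (s j)) (g₀ (t (i+1)) (s j)) (g₀ (t i) (s (j+1)))
        (g₀ (t (i+1)) (s (j+1))) (g₀ (t i) (s j)) (f (t (i+1)) (s j)) (f (t i) (s (j+1)))
      linarith
    have hpart : VLamPart Λ f g₀ n t m s ≤ 2 * δ * S1 + 2 * δ * S2 + 4 * δ * S12 := by
      rw [VLamPart]; linarith
    have hV : VLamJ Λ f g₀ ≤ ε/2 + VLamPart Λ f g₀ n t m s :=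
      hkey f hf g₀ (hgA y hyT)
    rw [rhoLam]
    nlinarith [hδε, hS1nn, hS2nn, hS12nn, hδpos.le]
end

section
/- Let (M,d,+) be a complete metric semigroup, κ a distortion function, and p ∈ (1,∞). The bivariate Korenblum bounded variation space (κBV(I×I,M), ρ_κ), with ρ_κ(f,g) = d(f(0,0),g(0,0)) + V_κ(f,g), is a complete metric space. -/
open Finset

/-- `κ : [0,1] → [0,1]` is a distortion function: increasing, concave,
`κ(0) = 0`, `κ(1) = 1`, and `κ(t)/t → ∞` as `t → 0⁺`. -/
def IsDistortion (κ : ℝ → ℝ) : Prop :=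
  MonotoneOn κ (Set.Icc 0 1) ∧ ConcaveOn ℝ (Set.Icc 0 1) κ
  ∧ (∀ t ∈ Set.Icc (0:ℝ) 1, κ t ∈ Set.Icc (0:ℝ) 1)
  ∧ κ 0 = 0 ∧ κ 1 = 1
  ∧ Filter.Tendsto (fun t => κ t / t) (nhdsWithin 0 (Set.Ioi 0)) Filter.atTop

variable {M : Type*} [MetricSpace M] [AddCommSemigroup M]

noncomputable def kSum1 (κ : ℝ → ℝ) (p : ℝ) (f : ℝ → ℝ → M) (n : ℕ) (t : ℕ → ℝ) : ℝ :=
  (∑ i ∈ range n, dist (f (t (i + 1)) 0) (f (t i) 0) / κ (t (i + 1) - t i)) ^ (1 / p)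

noncomputable def kSum2 (κ : ℝ → ℝ) (p : ℝ) (f : ℝ → ℝ → M) (m : ℕ) (s : ℕ → ℝ) : ℝ :=
  (∑ j ∈ range m, dist (f 0 (s (j + 1))) (f 0 (s j)) / κ (s (j + 1) - s j)) ^ (1 / p)

noncomputable def kSum12 (κ : ℝ → ℝ) (p : ℝ) (f : ℝ → ℝ → M) (n : ℕ) (t : ℕ → ℝ)
    (m : ℕ) (s : ℕ → ℝ) : ℝ :=
  (∑ j ∈ range m, ∑ i ∈ range n,
    dist (f (t (i + 1)) (s (j + 1)) + f (t i) (s j))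
         (f (t (i + 1)) (s j) + f (t i) (s (j + 1)))
      / (κ (t (i + 1) - t i) * κ (s (j + 1) - s j))) ^ (1 / p)

noncomputable def kSum1J (κ : ℝ → ℝ) (p : ℝ) (f g : ℝ → ℝ → M) (n : ℕ) (t : ℕ → ℝ) : ℝ :=
  (∑ i ∈ range n,
    dist (f (t (i + 1)) 0 + g (t i) 0) (f (t i) 0 + g (t (i + 1)) 0)
      / κ (t (i + 1) - t i)) ^ (1 / p)

noncomputable def kSum2J (κ : ℝ → ℝ) (p : ℝ) (f g : ℝ → ℝ → M) (m : ℕ) (s : ℕ → ℝ) : ℝ :=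
  (∑ j ∈ range m,
    dist (f 0 (s (j + 1)) + g 0 (s j)) (f 0 (s j) + g 0 (s (j + 1)))
      / κ (s (j + 1) - s j)) ^ (1 / p)

noncomputable def kSum12J (κ : ℝ → ℝ) (p : ℝ) (f g : ℝ → ℝ → M) (n : ℕ) (t : ℕ → ℝ)
    (m : ℕ) (s : ℕ → ℝ) : ℝ :=
  (∑ j ∈ range m, ∑ i ∈ range n,
    dist (f (t (i + 1)) (s (j + 1)) + f (t i) (s j)
            + g (t (i + 1)) (s j) + g (t i) (s (j + 1)))
         (g (t (i + 1)) (s (j + 1)) + g (t i) (s j)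
            + f (t (i + 1)) (s j) + f (t i) (s (j + 1)))
      / (κ (t (i + 1) - t i) * κ (s (j + 1) - s j))) ^ (1 / p)

def kSet1 (κ : ℝ → ℝ) (p : ℝ) (f : ℝ → ℝ → M) : Set ℝ :=
  {x | ∃ n t, IsPartition n t ∧ x = kSum1 κ p f n t}

def kSet2 (κ : ℝ → ℝ) (p : ℝ) (f : ℝ → ℝ → M) : Set ℝ :=
  {x | ∃ m s, IsPartition m s ∧ x = kSum2 κ p f m s}

def kSet12 (κ : ℝ → ℝ) (p : ℝ) (f : ℝ → ℝ → M) : Set ℝ :=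
  {x | ∃ n t m s, IsPartition n t ∧ IsPartition m s ∧ x = kSum12 κ p f n t m s}

/-- Total Korenblum variation `V_κ(f)`. -/
noncomputable def VKap (κ : ℝ → ℝ) (p : ℝ) (f : ℝ → ℝ → M) : ℝ :=
  sSup (kSet1 κ p f) + sSup (kSet2 κ p f) + sSup (kSet12 κ p f)

/-- `f` has bounded bivariate Korenblum variation. -/
def MemKapBV (κ : ℝ → ℝ) (p : ℝ) (f : ℝ → ℝ → M) : Prop :=
  BddAbove (kSet1 κ p f) ∧ BddAbove (kSet2 κ p f) ∧ BddAbove (kSet12 κ p f)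

/-- Joint Korenblum variation over a fixed pair of partitions, `V_κ(f,g,Π×Π*)`. -/
noncomputable def VKapPart (κ : ℝ → ℝ) (p : ℝ) (f g : ℝ → ℝ → M) (n : ℕ) (t : ℕ → ℝ)
    (m : ℕ) (s : ℕ → ℝ) : ℝ :=
  kSum1J κ p f g n t + kSum2J κ p f g m s + kSum12J κ p f g n t m s

def kSetJ (κ : ℝ → ℝ) (p : ℝ) (f g : ℝ → ℝ → M) : Set ℝ :=
  {x | ∃ n t m s, IsPartition n t ∧ IsPartition m s ∧ x = VKapPart κ p f g n t m s}

/-- Joint Korenblum variation `V_κ(f,g)`. -/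
noncomputable def VKapJ (κ : ℝ → ℝ) (p : ℝ) (f g : ℝ → ℝ → M) : ℝ :=
  sSup (kSetJ κ p f g)

/-- The metric `ρ_κ(f,g) = d(f(0,0), g(0,0)) + V_κ(f,g)`. -/
noncomputable def rhoKap (κ : ℝ → ℝ) (p : ℝ) (f g : ℝ → ℝ → M) : ℝ :=
  dist (f 0 0) (g 0 0) + VKapJ κ p f g


/-!
Translation invariance of `d` makes the joint distance `d(a + b', a' + b)` of two increments
satisfy a triangle inequality and be dominated by `d(a, a') + d(b, b')`; since `x ↦ x ^ (1/p)` is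
subadditive for `p ≥ 1`, both facts pass to the three partition sums, hence to `V_κ(f, g)`, and
`ρ_κ` is a pseudometric on `κBV`. Concavity gives `κ(x) ≥ x`, so a single cell of a partition
sum already bounds `d(f(x,y), g(x,y))` by `3 ρ_κ(f, g)` once `ρ_κ(f, g) ≤ 1`: thus `ρ_κ`
separates points of the square, and a `ρ_κ`-Cauchy sequence `F` converges pointwise to some `f`.
For fixed partitions the joint sums are continuous under pointwise convergence, which bounds
`ρ_κ(F u, f)`; and `d(b, b') ≤ d(a + b', a' + b) + d(a, a')` shows that `f` lies in `κBV`.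
-/

open Filter Topology Function

section MetricSemigroup

variable {X : Type*} [PseudoMetricSpace X] [AddCommSemigroup X] [IsIsometricVAdd X X]

namespace IsIsometricVAdd

theorem dist_add_add_right (a b c : X) : dist (a + c) (b + c) = dist a b := by
  rw [add_comm a, add_comm b, dist_add_left]

theorem dist_add_add_le (a b c d : X) : dist (a + c) (b + d) ≤ dist a b + dist c d :=
  calc dist (a + c) (b + d) ≤ dist (a + c) (b + c) + dist (b + c) (b + d) := dist_triangle _ _ _
    _ = dist a b + dist c d := by rw [dist_add_add_right, dist_add_left]

theorem lipschitzWith_add : LipschitzWith 2 fun x : X × X => x.1 + x.2 :=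
  LipschitzWith.of_dist_le_mul fun x y => by
    rw [Prod.dist_eq, NNReal.coe_ofNat, two_mul]
    exact (dist_add_add_le _ _ _ _).trans (add_le_add (le_max_left _ _) (le_max_right _ _))

instance continuousAdd : ContinuousAdd X :=
  ⟨lipschitzWith_add.continuous⟩

end IsIsometricVAdd

end MetricSemigroup

section JointDist

variable {X : Type*} [PseudoMetricSpace X] [AddCommSemigroup X]

/-- The joint distance `d(a + b', a' + b)` of the increments `a' ↦ a` and `b' ↦ b`; it is what
replaces `d(a - a', b - b')` when `X` has no subtraction. -/
def jointDist (a a' b b' : X) : ℝ := dist (a + b') (a' + b)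

theorem jointDist_nonneg (a a' b b' : X) : 0 ≤ jointDist a a' b b' := dist_nonneg

theorem jointDist_comm (a a' b b' : X) : jointDist a a' b b' = jointDist b b' a a' := by
  rw [jointDist, jointDist, dist_comm, add_comm a', add_comm a]

theorem jointDist_self (a a' : X) : jointDist a a' a a' = 0 := by
  rw [jointDist, add_comm a', dist_self]

theorem jointDist_self_self (a b : X) : jointDist a a b b = 0 :=
  dist_self _

variable [IsIsometricVAdd X X]

open IsIsometricVAdd

theorem dist_le_dist_add_add_add_dist (a b c d : X) :
    dist a b ≤ dist (a + c) (b + d) + dist c d :=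
  calc dist a b = dist (a + c) (b + c) := (dist_add_add_right a b c).symm
    _ ≤ dist (a + c) (b + d) + dist (b + d) (b + c) := dist_triangle _ _ _
    _ = dist (a + c) (b + d) + dist c d := by rw [dist_add_left, dist_comm d]

theorem jointDist_le_dist_add_dist (a a' b b' : X) :
    jointDist a a' b b' ≤ dist a a' + dist b b' := by
  rw [jointDist, dist_comm b]
  exact dist_add_add_le a a' b' b

theorem jointDist_triangle (a a' b b' c c' : X) :
    jointDist a a' b b' ≤ jointDist a a' c c' + jointDist c c' b b' :=
  calc jointDist a a' b b' = dist ((a + c') + (c + b')) ((a' + c) + (c' + b)) := by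
        rw [jointDist, ← dist_add_add_right _ _ (c + c')]; congr 1 <;> ac_rfl
    _ ≤ jointDist a a' c c' + jointDist c c' b b' := dist_add_add_le _ _ _ _

theorem incr_le_jointDist_add_incr (a a' b b' : X) :
    dist b b' ≤ jointDist a a' b b' + dist a a' := by
  rw [jointDist, dist_comm a a', dist_comm (a + b'), add_comm a', add_comm a]
  exact dist_le_dist_add_add_add_dist b b' a' a

theorem dist_le_jointDist_add_dist (a a' b b' : X) :
    dist a b ≤ jointDist a a' b b' + dist a' b' := by
  rw [jointDist, add_comm a', dist_comm a' b']
  exact dist_le_dist_add_add_add_dist a b b' a'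

theorem dist_le_three_mul_dist_add_jointDist (u v u₀ v₀ u₁ v₁ u₂ v₂ : X) :
    dist u v ≤ 3 * dist u₀ v₀ + jointDist u₁ u₀ v₁ v₀ + jointDist u₂ u₀ v₂ v₀
      + jointDist (u + u₀) (u₁ + u₂) (v + v₀) (v₁ + v₂) := by
  linarith [dist_le_dist_add_add_add_dist u v u₀ v₀,
    dist_le_jointDist_add_dist (u + u₀) (u₁ + u₂) (v + v₀) (v₁ + v₂),
    dist_add_add_le u₁ v₁ u₂ v₂,
    dist_le_jointDist_add_dist u₁ u₀ v₁ v₀, dist_le_jointDist_add_dist u₂ u₀ v₂ v₀]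

end JointDist

section RootSum

variable {ι : Type*} {p : ℝ} {s : Finset ι} {w D A B : ι → ℝ}

noncomputable def rootSum (p : ℝ) (s : Finset ι) (w D : ι → ℝ) : ℝ :=
  (∑ c ∈ s, D c / w c) ^ (1 / p)

theorem sum_div_nonneg (hw : ∀ c ∈ s, 0 ≤ w c) (hD : ∀ c, 0 ≤ D c) :
    0 ≤ ∑ c ∈ s, D c / w c :=
  sum_nonneg fun c hc => div_nonneg (hD c) (hw c hc)

theorem rootSum_nonneg (hw : ∀ c ∈ s, 0 ≤ w c) (hD : ∀ c, 0 ≤ D c) : 0 ≤ rootSum p s w D :=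
  Real.rpow_nonneg (sum_div_nonneg hw hD) _

theorem rootSum_le_add (hp : 1 ≤ p) (hw : ∀ c ∈ s, 0 ≤ w c) (hD : ∀ c, 0 ≤ D c)
    (hA : ∀ c, 0 ≤ A c) (hB : ∀ c, 0 ≤ B c) (h : ∀ c, D c ≤ A c + B c) :
    rootSum p s w D ≤ rootSum p s w A + rootSum p s w B := by
  have hsum : ∑ c ∈ s, D c / w c ≤ ∑ c ∈ s, A c / w c + ∑ c ∈ s, B c / w c := by
    rw [← sum_add_distrib]
    refine sum_le_sum fun c hc => ?_
    rw [← add_div]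
    exact div_le_div_of_nonneg_right (h c) (hw c hc)
  calc rootSum p s w D ≤ (∑ c ∈ s, A c / w c + ∑ c ∈ s, B c / w c) ^ (1 / p) :=
        Real.rpow_le_rpow (sum_div_nonneg hw hD) hsum (by positivity)
    _ ≤ rootSum p s w A + rootSum p s w B :=
        Real.rpow_add_le_add_rpow (sum_div_nonneg hw hA) (sum_div_nonneg hw hB) (by positivity)
          ((div_le_one (by linarith)).2 hp)

theorem div_le_rootSum_rpow (hp : p ≠ 0) (hw : ∀ c ∈ s, 0 ≤ w c) (hD : ∀ c, 0 ≤ D c) {c : ι}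
    (hc : c ∈ s) : D c / w c ≤ rootSum p s w D ^ p := by
  rw [rootSum, one_div, Real.rpow_inv_rpow (sum_div_nonneg hw hD) hp]
  exact single_le_sum (fun c hc => div_nonneg (hD c) (hw c hc)) hc

theorem rootSum_eq_zero (hp : p ≠ 0) (h : ∀ c ∈ s, D c = 0) : rootSum p s w D = 0 := by
  rw [rootSum, sum_eq_zero fun c hc => by rw [h c hc, zero_div]]
  exact Real.zero_rpow (one_div_ne_zero hp)

theorem tendsto_rootSum {α : Type*} {l : Filter α} {Dₐ : α → ι → ℝ} (hp : 0 ≤ p)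
    (h : ∀ c ∈ s, Tendsto (fun a => Dₐ a c) l (𝓝 (D c))) :
    Tendsto (fun a => rootSum p s w (Dₐ a)) l (𝓝 (rootSum p s w D)) :=
  (tendsto_finsetSum s fun c hc => (h c hc).div_const (w c)).rpow_const (Or.inr (by positivity))

end RootSum

namespace IsPartition

variable {n : ℕ} {t : ℕ → ℝ}

theorem monotoneOn (ht : IsPartition n t) : MonotoneOn t (Set.Iic n) :=
  (strictMonoOn_Iic_of_lt_succ ht.2.2.2).monotoneOn

theorem mem_Icc (ht : IsPartition n t) {i : ℕ} (hi : i ≤ n) : t i ∈ Set.Icc (0 : ℝ) 1 := by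
  rw [← ht.2.1, ← ht.2.2.1]
  exact ⟨ht.monotoneOn n.zero_le hi i.zero_le, ht.monotoneOn hi Set.self_mem_Iic hi⟩

theorem mem_Icc_of_mem_range (ht : IsPartition n t) {i : ℕ} (hi : i ∈ range n) :
    t i ∈ Set.Icc (0 : ℝ) 1 ∧ t (i + 1) ∈ Set.Icc (0 : ℝ) 1 :=
  ⟨ht.mem_Icc (mem_range.1 hi).le, ht.mem_Icc (mem_range.1 hi)⟩

theorem sub_mem_Ioc (ht : IsPartition n t) {i : ℕ} (hi : i < n) :
    t (i + 1) - t i ∈ Set.Ioc (0 : ℝ) 1 := by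
  have h₀ := ht.mem_Icc hi.le
  have h₁ := ht.mem_Icc (Nat.succ_le_of_lt hi)
  exact ⟨sub_pos.2 (ht.2.2.2 i hi), by linarith [h₀.1, h₁.2]⟩

end IsPartition

theorem isPartition_one : IsPartition 1 (fun i => (i : ℝ)) :=
  ⟨one_pos, Nat.cast_zero, Nat.cast_one, fun i hi => by norm_num⟩

theorem exists_isPartition_apply_one {x : ℝ} (hx : x ∈ Set.Ioc (0 : ℝ) 1) :
    ∃ n t, IsPartition n t ∧ t 1 = x := by
  rcases hx.2.eq_or_lt with rfl | hx₁
  · exact ⟨1, _, isPartition_one, Nat.cast_one⟩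
  · refine ⟨2, fun i => if i = 0 then 0 else if i = 1 then x else 1,
      ⟨two_pos, rfl, rfl, fun i hi => ?_⟩, rfl⟩
    interval_cases i <;> simp [hx.1, hx₁]

theorem forall_mem_Icc_of_isPartition {P : ℝ → Prop} (h₀ : P 0)
    (h : ∀ n t, IsPartition n t → P (t 1)) {x : ℝ} (hx : x ∈ Set.Icc (0 : ℝ) 1) : P x := by
  rcases hx.1.eq_or_lt with rfl | hx₀
  · exact h₀
  obtain ⟨n, t, ht, rfl⟩ := exists_isPartition_apply_one ⟨hx₀, hx.2⟩
  exact h n t ht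

namespace IsDistortion

variable {κ : ℝ → ℝ}

theorem self_le (hκ : IsDistortion κ) {x : ℝ} (hx : x ∈ Set.Icc (0 : ℝ) 1) : x ≤ κ x := by
  have h := hκ.2.1.2 (Set.left_mem_Icc.2 zero_le_one) (Set.right_mem_Icc.2 zero_le_one)
    (sub_nonneg.2 hx.2) hx.1 (sub_add_cancel 1 x)
  simpa [hκ.2.2.2.1, hκ.2.2.2.2.1] using h

theorem mem_Ioc (hκ : IsDistortion κ) {x : ℝ} (hx : x ∈ Set.Ioc (0 : ℝ) 1) :
    κ x ∈ Set.Ioc (0 : ℝ) 1 :=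
  ⟨hx.1.trans_le (hκ.self_le (Set.Ioc_subset_Icc_self hx)),
    (hκ.2.2.1 x (Set.Ioc_subset_Icc_self hx)).2⟩

end IsDistortion

namespace IsPartition

variable {κ : ℝ → ℝ} {n : ℕ} {t : ℕ → ℝ}

theorem weight_mem_Ioc (hκ : IsDistortion κ) (ht : IsPartition n t) {i : ℕ} (hi : i < n) :
    κ (t (i + 1) - t i) ∈ Set.Ioc (0 : ℝ) 1 :=
  hκ.mem_Ioc (ht.sub_mem_Ioc hi)

theorem weight_nonneg (hκ : IsDistortion κ) (ht : IsPartition n t) :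
    ∀ i ∈ range n, 0 ≤ κ (t (i + 1) - t i) :=
  fun _ hi => (ht.weight_mem_Ioc hκ (mem_range.1 hi)).1.le

end IsPartition

section Cells

variable {X : Type*} [Add X] {κ : ℝ → ℝ} {n m : ℕ} {t s : ℕ → ℝ}

/-- The cell `c = (j, i)` is the rectangle `[t i, t (i+1)] × [s j, s (j+1)]`; the distance
between the sums over its two diagonals is the mixed increment of `f` on it. -/
def rectDiag (f : ℝ → ℝ → X) (t s : ℕ → ℝ) (c : ℕ × ℕ) : X :=
  f (t (c.2 + 1)) (s (c.1 + 1)) + f (t c.2) (s c.1)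

def rectAntidiag (f : ℝ → ℝ → X) (t s : ℕ → ℝ) (c : ℕ × ℕ) : X :=
  f (t (c.2 + 1)) (s c.1) + f (t c.2) (s (c.1 + 1))

def rectWeight (κ : ℝ → ℝ) (t s : ℕ → ℝ) (c : ℕ × ℕ) : ℝ :=
  κ (t (c.2 + 1) - t c.2) * κ (s (c.1 + 1) - s c.1)

theorem rectWeight_nonneg (hκ : IsDistortion κ) (ht : IsPartition n t) (hs : IsPartition m s) :
    ∀ c ∈ range m ×ˢ range n, 0 ≤ rectWeight κ t s c := fun c hc => by
  rw [mem_product] at hc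
  exact mul_nonneg (ht.weight_nonneg hκ _ hc.2) (hs.weight_nonneg hκ _ hc.1)

theorem rectDiag_congr {f g : ℝ → ℝ → X} (ht : IsPartition n t) (hs : IsPartition m s)
    (hfg : ∀ x ∈ Set.Icc (0 : ℝ) 1, ∀ y ∈ Set.Icc (0 : ℝ) 1, f x y = g x y)
    {c : ℕ × ℕ} (hc : c ∈ range m ×ˢ range n) :
    rectDiag f t s c = rectDiag g t s c ∧ rectAntidiag f t s c = rectAntidiag g t s c := by
  obtain ⟨hsc, htc⟩ := mem_product.1 hc
  obtain ⟨ht₀, ht₁⟩ := ht.mem_Icc_of_mem_range htc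
  obtain ⟨hs₀, hs₁⟩ := hs.mem_Icc_of_mem_range hsc
  simp only [rectDiag, rectAntidiag, hfg _ ht₀ _ hs₀, hfg _ ht₀ _ hs₁, hfg _ ht₁ _ hs₀,
    hfg _ ht₁ _ hs₁, and_self]

theorem tendsto_rectDiag [TopologicalSpace X] [ContinuousAdd X] {g : ℝ → ℝ → X} {α : Type*}
    {l : Filter α} {G : α → ℝ → ℝ → X} (ht : IsPartition n t) (hs : IsPartition m s)
    (hG : ∀ x ∈ Set.Icc (0 : ℝ) 1, ∀ y ∈ Set.Icc (0 : ℝ) 1, Tendsto (G · x y) l (𝓝 (g x y)))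
    {c : ℕ × ℕ} (hc : c ∈ range m ×ˢ range n) :
    Tendsto (fun a => rectDiag (G a) t s c) l (𝓝 (rectDiag g t s c)) ∧
      Tendsto (fun a => rectAntidiag (G a) t s c) l (𝓝 (rectAntidiag g t s c)) := by
  obtain ⟨hsc, htc⟩ := mem_product.1 hc
  obtain ⟨ht₀, ht₁⟩ := ht.mem_Icc_of_mem_range htc
  obtain ⟨hs₀, hs₁⟩ := hs.mem_Icc_of_mem_range hsc
  exact ⟨(hG _ ht₁ _ hs₁).add (hG _ ht₀ _ hs₀), (hG _ ht₁ _ hs₀).add (hG _ ht₀ _ hs₁)⟩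

end Cells

section Representation

variable {κ : ℝ → ℝ} {p : ℝ} {f g : ℝ → ℝ → M} {n m : ℕ} {t s : ℕ → ℝ}

theorem kSum1_eq_rootSum {X : Type*} [MetricSpace X] {f : ℝ → ℝ → X} :
    kSum1 κ p f n t = rootSum p (range n) (fun i => κ (t (i + 1) - t i))
      fun i => dist (f (t (i + 1)) 0) (f (t i) 0) :=
  rfl

theorem kSum1J_eq_rootSum : kSum1J κ p f g n t =
    rootSum p (range n) (fun i => κ (t (i + 1) - t i))
      fun i => jointDist (f (t (i + 1)) 0) (f (t i) 0) (g (t (i + 1)) 0) (g (t i) 0) :=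
  rfl

theorem kSum2J_eq_kSum1J_swap : kSum2J κ p f g m s = kSum1J κ p (swap f) (swap g) m s :=
  rfl

theorem kSum12_eq_rootSum : kSum12 κ p f n t m s =
    rootSum p (range m ×ˢ range n) (rectWeight κ t s)
      fun c => dist (rectDiag f t s c) (rectAntidiag f t s c) := by
  rw [kSum12, rootSum, sum_product]
  rfl

theorem kSum12J_eq_rootSum : kSum12J κ p f g n t m s =
    rootSum p (range m ×ˢ range n) (rectWeight κ t s)
      fun c => jointDist (rectDiag f t s c) (rectAntidiag f t s c)
        (rectDiag g t s c) (rectAntidiag g t s c) := by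
  rw [kSum12J, rootSum, sum_product]
  congr 1
  refine sum_congr rfl fun j _ => sum_congr rfl fun i _ => ?_
  simp only [jointDist, rectDiag, rectAntidiag, rectWeight]
  congr 2 <;> ac_rfl

end Representation

section EdgeSums

variable {κ : ℝ → ℝ} {p : ℝ} {f g h : ℝ → ℝ → M} {n : ℕ} {t : ℕ → ℝ}

theorem kSum1J_nonneg (hκ : IsDistortion κ) (ht : IsPartition n t) : 0 ≤ kSum1J κ p f g n t :=
  rootSum_nonneg (ht.weight_nonneg hκ) fun _ => jointDist_nonneg _ _ _ _

theorem kSum1J_comm : kSum1J κ p f g n t = kSum1J κ p g f n t := by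
  simp only [kSum1J_eq_rootSum]
  congr 1
  funext i
  exact jointDist_comm _ _ _ _

theorem kSum1J_eq_zero (hp : p ≠ 0) (ht : IsPartition n t)
    (hfg : ∀ x ∈ Set.Icc (0 : ℝ) 1, ∀ y ∈ Set.Icc (0 : ℝ) 1, f x y = g x y) :
    kSum1J κ p f g n t = 0 := by
  rw [kSum1J_eq_rootSum]
  refine rootSum_eq_zero hp fun i hi => ?_
  obtain ⟨ht₀, ht₁⟩ := ht.mem_Icc_of_mem_range hi
  rw [hfg _ ht₀ 0 unitInterval.zero_mem, hfg _ ht₁ 0 unitInterval.zero_mem, jointDist_self]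

theorem jointDist_le_kSum1J_rpow (hκ : IsDistortion κ) (hp : p ≠ 0) (ht : IsPartition n t)
    {i : ℕ} (hi : i < n) :
    jointDist (f (t (i + 1)) 0) (f (t i) 0) (g (t (i + 1)) 0) (g (t i) 0)
      ≤ kSum1J κ p f g n t ^ p := by
  have hw := ht.weight_mem_Ioc hκ hi
  rw [kSum1J_eq_rootSum]
  exact (le_div_self (jointDist_nonneg _ _ _ _) hw.1 hw.2).trans
    (div_le_rootSum_rpow hp (ht.weight_nonneg hκ)
      (fun i => jointDist_nonneg (f (t (i + 1)) 0) (f (t i) 0) (g (t (i + 1)) 0) (g (t i) 0))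
      (mem_range.2 hi))

variable [IsIsometricVAdd M M]

theorem kSum1J_le_add (hκ : IsDistortion κ) (hp : 1 ≤ p) (ht : IsPartition n t) :
    kSum1J κ p f g n t ≤ kSum1 κ p f n t + kSum1 κ p g n t := by
  rw [kSum1J_eq_rootSum, kSum1_eq_rootSum, kSum1_eq_rootSum]
  exact rootSum_le_add hp (ht.weight_nonneg hκ) (fun _ => jointDist_nonneg _ _ _ _)
    (fun _ => dist_nonneg) (fun _ => dist_nonneg) fun _ => jointDist_le_dist_add_dist _ _ _ _

theorem kSum1J_triangle (hκ : IsDistortion κ) (hp : 1 ≤ p) (ht : IsPartition n t) :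
    kSum1J κ p f g n t ≤ kSum1J κ p f h n t + kSum1J κ p h g n t := by
  simp only [kSum1J_eq_rootSum]
  exact rootSum_le_add hp (ht.weight_nonneg hκ) (fun _ => jointDist_nonneg _ _ _ _)
    (fun _ => jointDist_nonneg _ _ _ _) (fun _ => jointDist_nonneg _ _ _ _)
    fun _ => jointDist_triangle _ _ _ _ _ _

theorem kSum1_le_kSum1J_add (hκ : IsDistortion κ) (hp : 1 ≤ p) (ht : IsPartition n t) :
    kSum1 κ p g n t ≤ kSum1J κ p f g n t + kSum1 κ p f n t := by
  rw [kSum1J_eq_rootSum, kSum1_eq_rootSum, kSum1_eq_rootSum]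
  exact rootSum_le_add hp (ht.weight_nonneg hκ) (fun _ => dist_nonneg)
    (fun _ => jointDist_nonneg _ _ _ _) (fun _ => dist_nonneg)
    fun _ => incr_le_jointDist_add_incr _ _ _ _

theorem tendsto_kSum1J {α : Type*} {l : Filter α} {G : α → ℝ → ℝ → M} (hp : 0 ≤ p)
    (ht : IsPartition n t)
    (hG : ∀ x ∈ Set.Icc (0 : ℝ) 1, ∀ y ∈ Set.Icc (0 : ℝ) 1, Tendsto (G · x y) l (𝓝 (g x y))) :
    Tendsto (fun a => kSum1J κ p f (G a) n t) l (𝓝 (kSum1J κ p f g n t)) := by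
  simp only [kSum1J_eq_rootSum, jointDist]
  refine tendsto_rootSum hp fun i hi => ?_
  obtain ⟨ht₀, ht₁⟩ := ht.mem_Icc_of_mem_range hi
  exact (tendsto_const_nhds.add (hG _ ht₀ 0 unitInterval.zero_mem)).dist
    (tendsto_const_nhds.add (hG _ ht₁ 0 unitInterval.zero_mem))

end EdgeSums

section RectSums

variable {κ : ℝ → ℝ} {p : ℝ} {f g h : ℝ → ℝ → M} {n m : ℕ} {t s : ℕ → ℝ}

theorem kSum12J_nonneg (hκ : IsDistortion κ) (ht : IsPartition n t) (hs : IsPartition m s) :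
    0 ≤ kSum12J κ p f g n t m s := by
  rw [kSum12J_eq_rootSum]
  exact rootSum_nonneg (rectWeight_nonneg hκ ht hs) fun _ => jointDist_nonneg _ _ _ _

theorem kSum12J_comm : kSum12J κ p f g n t m s = kSum12J κ p g f n t m s := by
  simp only [kSum12J_eq_rootSum]
  congr 1
  funext c
  exact jointDist_comm _ _ _ _

theorem kSum12J_eq_zero (hp : p ≠ 0) (ht : IsPartition n t) (hs : IsPartition m s)
    (hfg : ∀ x ∈ Set.Icc (0 : ℝ) 1, ∀ y ∈ Set.Icc (0 : ℝ) 1, f x y = g x y) :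
    kSum12J κ p f g n t m s = 0 := by
  rw [kSum12J_eq_rootSum]
  refine rootSum_eq_zero hp fun c hc => ?_
  obtain ⟨hdiag, hanti⟩ := rectDiag_congr ht hs hfg hc
  rw [hdiag, hanti, jointDist_self]

theorem jointDist_le_kSum12J_rpow (hκ : IsDistortion κ) (hp : p ≠ 0) (ht : IsPartition n t)
    (hs : IsPartition m s) {c : ℕ × ℕ} (hc : c ∈ range m ×ˢ range n) :
    jointDist (rectDiag f t s c) (rectAntidiag f t s c) (rectDiag g t s c) (rectAntidiag g t s c)
      ≤ kSum12J κ p f g n t m s ^ p := by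
  obtain ⟨hsc, htc⟩ := mem_product.1 hc
  have hwt := ht.weight_mem_Ioc hκ (mem_range.1 htc)
  have hws := hs.weight_mem_Ioc hκ (mem_range.1 hsc)
  rw [kSum12J_eq_rootSum]
  exact (le_div_self (jointDist_nonneg _ _ _ _) (mul_pos hwt.1 hws.1)
    (mul_le_one₀ hwt.2 hws.1.le hws.2)).trans
    (div_le_rootSum_rpow hp (rectWeight_nonneg hκ ht hs)
      (fun c => jointDist_nonneg (rectDiag f t s c) (rectAntidiag f t s c) (rectDiag g t s c)
        (rectAntidiag g t s c)) hc)

variable [IsIsometricVAdd M M]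

theorem kSum12J_le_add (hκ : IsDistortion κ) (hp : 1 ≤ p) (ht : IsPartition n t)
    (hs : IsPartition m s) :
    kSum12J κ p f g n t m s ≤ kSum12 κ p f n t m s + kSum12 κ p g n t m s := by
  rw [kSum12J_eq_rootSum, kSum12_eq_rootSum, kSum12_eq_rootSum]
  exact rootSum_le_add hp (rectWeight_nonneg hκ ht hs) (fun _ => jointDist_nonneg _ _ _ _)
    (fun _ => dist_nonneg) (fun _ => dist_nonneg) fun _ => jointDist_le_dist_add_dist _ _ _ _

theorem kSum12J_triangle (hκ : IsDistortion κ) (hp : 1 ≤ p) (ht : IsPartition n t)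
    (hs : IsPartition m s) :
    kSum12J κ p f g n t m s ≤ kSum12J κ p f h n t m s + kSum12J κ p h g n t m s := by
  simp only [kSum12J_eq_rootSum]
  exact rootSum_le_add hp (rectWeight_nonneg hκ ht hs) (fun _ => jointDist_nonneg _ _ _ _)
    (fun _ => jointDist_nonneg _ _ _ _) (fun _ => jointDist_nonneg _ _ _ _)
    fun _ => jointDist_triangle _ _ _ _ _ _

theorem kSum12_le_kSum12J_add (hκ : IsDistortion κ) (hp : 1 ≤ p) (ht : IsPartition n t)
    (hs : IsPartition m s) :
    kSum12 κ p g n t m s ≤ kSum12J κ p f g n t m s + kSum12 κ p f n t m s := by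
  rw [kSum12J_eq_rootSum, kSum12_eq_rootSum, kSum12_eq_rootSum]
  exact rootSum_le_add hp (rectWeight_nonneg hκ ht hs) (fun _ => dist_nonneg)
    (fun _ => jointDist_nonneg _ _ _ _) (fun _ => dist_nonneg)
    fun _ => incr_le_jointDist_add_incr _ _ _ _

theorem tendsto_kSum12J {α : Type*} {l : Filter α} {G : α → ℝ → ℝ → M} (hp : 0 ≤ p)
    (ht : IsPartition n t) (hs : IsPartition m s)
    (hG : ∀ x ∈ Set.Icc (0 : ℝ) 1, ∀ y ∈ Set.Icc (0 : ℝ) 1, Tendsto (G · x y) l (𝓝 (g x y))) :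
    Tendsto (fun a => kSum12J κ p f (G a) n t m s) l (𝓝 (kSum12J κ p f g n t m s)) := by
  simp only [kSum12J_eq_rootSum, jointDist]
  refine tendsto_rootSum hp fun c hc => ?_
  obtain ⟨hdiag, hanti⟩ := tendsto_rectDiag ht hs hG hc
  exact (tendsto_const_nhds.add hanti).dist (tendsto_const_nhds.add hdiag)

end RectSums
section PartitionVariation

variable {κ : ℝ → ℝ} {p : ℝ} {f g h : ℝ → ℝ → M} {n m : ℕ} {t s : ℕ → ℝ}

theorem kSum1J_le_VKapPart (hκ : IsDistortion κ) (ht : IsPartition n t) (hs : IsPartition m s) :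
    kSum1J κ p f g n t ≤ VKapPart κ p f g n t m s := by
  have h₂ : 0 ≤ kSum2J κ p f g m s := kSum1J_nonneg (f := swap f) (g := swap g) hκ hs
  have h₁₂ := kSum12J_nonneg (p := p) (f := f) (g := g) hκ ht hs
  rw [VKapPart]
  linarith

theorem kSum2J_le_VKapPart (hκ : IsDistortion κ) (ht : IsPartition n t) (hs : IsPartition m s) :
    kSum2J κ p f g m s ≤ VKapPart κ p f g n t m s := by
  have h₁ := kSum1J_nonneg (p := p) (f := f) (g := g) hκ ht
  have h₁₂ := kSum12J_nonneg (p := p) (f := f) (g := g) hκ ht hs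
  rw [VKapPart]
  linarith

theorem kSum12J_le_VKapPart (hκ : IsDistortion κ) (ht : IsPartition n t) (hs : IsPartition m s) :
    kSum12J κ p f g n t m s ≤ VKapPart κ p f g n t m s := by
  have h₁ := kSum1J_nonneg (p := p) (f := f) (g := g) hκ ht
  have h₂ : 0 ≤ kSum2J κ p f g m s := kSum1J_nonneg (f := swap f) (g := swap g) hκ hs
  rw [VKapPart]
  linarith

theorem VKapPart_nonneg (hκ : IsDistortion κ) (ht : IsPartition n t) (hs : IsPartition m s) :
    0 ≤ VKapPart κ p f g n t m s :=
  (kSum1J_nonneg hκ ht).trans (kSum1J_le_VKapPart hκ ht hs)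

theorem VKapPart_comm : VKapPart κ p f g n t m s = VKapPart κ p g f n t m s := by
  rw [VKapPart, VKapPart, kSum1J_comm, kSum2J_eq_kSum1J_swap, kSum2J_eq_kSum1J_swap,
    kSum1J_comm (f := swap f), kSum12J_comm]

theorem VKapPart_eq_zero (hp : p ≠ 0) (ht : IsPartition n t) (hs : IsPartition m s)
    (hfg : ∀ x ∈ Set.Icc (0 : ℝ) 1, ∀ y ∈ Set.Icc (0 : ℝ) 1, f x y = g x y) :
    VKapPart κ p f g n t m s = 0 := by
  rw [VKapPart, kSum1J_eq_zero hp ht hfg, kSum2J_eq_kSum1J_swap,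
    kSum1J_eq_zero hp hs fun y hy x hx => hfg x hx y hy, kSum12J_eq_zero hp ht hs hfg]
  norm_num

variable [IsIsometricVAdd M M]

theorem VKapPart_le_VKap_add (hκ : IsDistortion κ) (hp : 1 ≤ p) (hf : MemKapBV κ p f)
    (hg : MemKapBV κ p g) (ht : IsPartition n t) (hs : IsPartition m s) :
    VKapPart κ p f g n t m s ≤ VKap κ p f + VKap κ p g := by
  have h₁ := kSum1J_le_add (f := f) (g := g) hκ hp ht
  have h₂ : kSum2J κ p f g m s ≤ kSum2 κ p f m s + kSum2 κ p g m s :=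
    kSum1J_le_add (f := swap f) (g := swap g) hκ hp hs
  have h₁₂ := kSum12J_le_add (f := f) (g := g) hκ hp ht hs
  rw [VKapPart, VKap, VKap]
  linarith [le_csSup hf.1 ⟨n, t, ht, rfl⟩, le_csSup hg.1 ⟨n, t, ht, rfl⟩,
    le_csSup hf.2.1 ⟨m, s, hs, rfl⟩, le_csSup hg.2.1 ⟨m, s, hs, rfl⟩,
    le_csSup hf.2.2 ⟨n, t, m, s, ht, hs, rfl⟩, le_csSup hg.2.2 ⟨n, t, m, s, ht, hs, rfl⟩]

theorem VKapPart_triangle (hκ : IsDistortion κ) (hp : 1 ≤ p) (ht : IsPartition n t)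
    (hs : IsPartition m s) :
    VKapPart κ p f g n t m s ≤ VKapPart κ p f h n t m s + VKapPart κ p h g n t m s := by
  have h₁ := kSum1J_triangle (f := f) (g := g) (h := h) hκ hp ht
  have h₂ : kSum2J κ p f g m s ≤ kSum2J κ p f h m s + kSum2J κ p h g m s :=
    kSum1J_triangle (f := swap f) (g := swap g) (h := swap h) hκ hp hs
  have h₁₂ := kSum12J_triangle (f := f) (g := g) (h := h) hκ hp ht hs
  simp only [VKapPart]
  linarith

theorem tendsto_VKapPart {α : Type*} {l : Filter α} {G : α → ℝ → ℝ → M} (hp : 0 ≤ p)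
    (ht : IsPartition n t) (hs : IsPartition m s)
    (hG : ∀ x ∈ Set.Icc (0 : ℝ) 1, ∀ y ∈ Set.Icc (0 : ℝ) 1, Tendsto (G · x y) l (𝓝 (g x y))) :
    Tendsto (fun a => VKapPart κ p f (G a) n t m s) l (𝓝 (VKapPart κ p f g n t m s)) :=
  ((tendsto_kSum1J hp ht hG).add (tendsto_kSum1J (f := swap f) (G := fun a => swap (G a)) hp hs
    fun y hy x hx => hG x hx y hy)).add (tendsto_kSum12J hp ht hs hG)

end PartitionVariation

section JointVariation

variable {κ : ℝ → ℝ} {p : ℝ} {f g h : ℝ → ℝ → M} {n m : ℕ} {t s : ℕ → ℝ}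

theorem kSetJ_nonempty : (kSetJ κ p f g).Nonempty :=
  ⟨_, 1, _, 1, _, isPartition_one, isPartition_one, rfl⟩

theorem VKapJ_le {C : ℝ}
    (h : ∀ n t m s, IsPartition n t → IsPartition m s → VKapPart κ p f g n t m s ≤ C) :
    VKapJ κ p f g ≤ C :=
  csSup_le kSetJ_nonempty fun _ ⟨n, t, m, s, ht, hs, hx⟩ => hx ▸ h n t m s ht hs

theorem VKapJ_comm : VKapJ κ p f g = VKapJ κ p g f := by
  simp only [VKapJ, kSetJ, VKapPart_comm (f := f)]

theorem VKapJ_eq_zero (hp : p ≠ 0)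
    (hfg : ∀ x ∈ Set.Icc (0 : ℝ) 1, ∀ y ∈ Set.Icc (0 : ℝ) 1, f x y = g x y) :
    VKapJ κ p f g = 0 := by
  have : kSetJ κ p f g = {0} := Set.eq_singleton_iff_nonempty_unique_mem.2
    ⟨kSetJ_nonempty, fun _ ⟨_, _, _, _, ht, hs, hx⟩ => hx ▸ VKapPart_eq_zero hp ht hs hfg⟩
  rw [VKapJ, this, csSup_singleton]

variable [IsIsometricVAdd M M]

theorem kSetJ_bddAbove (hκ : IsDistortion κ) (hp : 1 ≤ p) (hf : MemKapBV κ p f)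
    (hg : MemKapBV κ p g) : BddAbove (kSetJ κ p f g) :=
  ⟨VKap κ p f + VKap κ p g, fun _ ⟨_, _, _, _, ht, hs, hx⟩ =>
    hx ▸ VKapPart_le_VKap_add hκ hp hf hg ht hs⟩

theorem VKapPart_le_VKapJ (hκ : IsDistortion κ) (hp : 1 ≤ p) (hf : MemKapBV κ p f)
    (hg : MemKapBV κ p g) (ht : IsPartition n t) (hs : IsPartition m s) :
    VKapPart κ p f g n t m s ≤ VKapJ κ p f g :=
  le_csSup (kSetJ_bddAbove hκ hp hf hg) ⟨n, t, m, s, ht, hs, rfl⟩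

theorem VKapJ_nonneg (hκ : IsDistortion κ) (hp : 1 ≤ p) (hf : MemKapBV κ p f)
    (hg : MemKapBV κ p g) : 0 ≤ VKapJ κ p f g :=
  (VKapPart_nonneg hκ isPartition_one isPartition_one).trans
    (VKapPart_le_VKapJ hκ hp hf hg isPartition_one isPartition_one)

theorem VKapJ_triangle (hκ : IsDistortion κ) (hp : 1 ≤ p) (hf : MemKapBV κ p f)
    (hg : MemKapBV κ p g) (hh : MemKapBV κ p h) :
    VKapJ κ p f g ≤ VKapJ κ p f h + VKapJ κ p h g :=
  VKapJ_le fun _ _ _ _ ht hs => (VKapPart_triangle hκ hp ht hs).trans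
    (add_le_add (VKapPart_le_VKapJ hκ hp hf hh ht hs) (VKapPart_le_VKapJ hκ hp hh hg ht hs))

theorem rpow_le_VKapJ_rpow (hκ : IsDistortion κ) (hp : 1 ≤ p) (hf : MemKapBV κ p f)
    (hg : MemKapBV κ p g) (ht : IsPartition n t) (hs : IsPartition m s) {a : ℝ} (ha : 0 ≤ a)
    (h : a ≤ VKapPart κ p f g n t m s) : a ^ p ≤ VKapJ κ p f g ^ p :=
  Real.rpow_le_rpow ha (h.trans (VKapPart_le_VKapJ hκ hp hf hg ht hs)) (by linarith)

theorem jointDist_bottomEdge_le_VKapJ_rpow (hκ : IsDistortion κ) (hp : 1 ≤ p)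
    (hf : MemKapBV κ p f) (hg : MemKapBV κ p g) {x : ℝ} (hx : x ∈ Set.Icc (0 : ℝ) 1) :
    jointDist (f x 0) (f 0 0) (g x 0) (g 0 0) ≤ VKapJ κ p f g ^ p := by
  refine forall_mem_Icc_of_isPartition (P := fun x => jointDist (f x 0) (f 0 0) (g x 0) (g 0 0)
    ≤ VKapJ κ p f g ^ p) ?_ (fun n t ht => ?_) hx
  · rw [jointDist_self_self]
    exact Real.rpow_nonneg (VKapJ_nonneg hκ hp hf hg) p
  · have h := jointDist_le_kSum1J_rpow (f := f) (g := g) hκ (by positivity) ht ht.1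
    rw [zero_add, ht.2.1] at h
    exact h.trans (rpow_le_VKapJ_rpow hκ hp hf hg ht isPartition_one (kSum1J_nonneg hκ ht)
      (kSum1J_le_VKapPart hκ ht isPartition_one))

theorem jointDist_leftEdge_le_VKapJ_rpow (hκ : IsDistortion κ) (hp : 1 ≤ p)
    (hf : MemKapBV κ p f) (hg : MemKapBV κ p g) {y : ℝ} (hy : y ∈ Set.Icc (0 : ℝ) 1) :
    jointDist (f 0 y) (f 0 0) (g 0 y) (g 0 0) ≤ VKapJ κ p f g ^ p := by
  refine forall_mem_Icc_of_isPartition (P := fun y => jointDist (f 0 y) (f 0 0) (g 0 y) (g 0 0)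
    ≤ VKapJ κ p f g ^ p) ?_ (fun m s hs => ?_) hy
  · rw [jointDist_self_self]
    exact Real.rpow_nonneg (VKapJ_nonneg hκ hp hf hg) p
  · have h := jointDist_le_kSum1J_rpow (f := swap f) (g := swap g) hκ (by positivity) hs hs.1
    rw [zero_add, hs.2.1] at h
    exact h.trans (rpow_le_VKapJ_rpow hκ hp hf hg isPartition_one hs
      (kSum1J_nonneg (f := swap f) (g := swap g) hκ hs)
      (kSum2J_le_VKapPart hκ isPartition_one hs))

theorem jointDist_corner_le_VKapJ_rpow (hκ : IsDistortion κ) (hp : 1 ≤ p)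
    (hf : MemKapBV κ p f) (hg : MemKapBV κ p g) {x y : ℝ} (hx : x ∈ Set.Icc (0 : ℝ) 1)
    (hy : y ∈ Set.Icc (0 : ℝ) 1) :
    jointDist (f x y + f 0 0) (f x 0 + f 0 y) (g x y + g 0 0) (g x 0 + g 0 y)
      ≤ VKapJ κ p f g ^ p := by
  have hV := Real.rpow_nonneg (VKapJ_nonneg hκ hp hf hg) p
  refine forall_mem_Icc_of_isPartition (P := fun x => ∀ y ∈ Set.Icc (0 : ℝ) 1,
      jointDist (f x y + f 0 0) (f x 0 + f 0 y) (g x y + g 0 0) (g x 0 + g 0 y)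
        ≤ VKapJ κ p f g ^ p) (fun y _ => ?_) (fun n t ht => ?_) hx y hy
  · rwa [add_comm (f 0 y), add_comm (g 0 y), jointDist_self_self]
  refine fun y hy => forall_mem_Icc_of_isPartition (P := fun y =>
    jointDist (f (t 1) y + f 0 0) (f (t 1) 0 + f 0 y) (g (t 1) y + g 0 0) (g (t 1) 0 + g 0 y)
      ≤ VKapJ κ p f g ^ p) ?_ (fun m s hs => ?_) hy
  · rwa [jointDist_self_self]
  have h := jointDist_le_kSum12J_rpow (f := f) (g := g) (c := (0, 0)) hκ (by positivity) ht hs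
    (by simp [ht.1, hs.1])
  simp only [rectDiag, rectAntidiag, zero_add, ht.2.1, hs.2.1] at h
  exact h.trans (rpow_le_VKapJ_rpow hκ hp hf hg ht hs (kSum12J_nonneg hκ ht hs)
    (kSum12J_le_VKapPart hκ ht hs))

theorem dist_apply_le_three_mul (hκ : IsDistortion κ) (hp : 1 ≤ p) (hf : MemKapBV κ p f)
    (hg : MemKapBV κ p g) {x y : ℝ} (hx : x ∈ Set.Icc (0 : ℝ) 1) (hy : y ∈ Set.Icc (0 : ℝ) 1) :
    dist (f x y) (g x y) ≤ 3 * (dist (f 0 0) (g 0 0) + VKapJ κ p f g ^ p) := by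
  linarith [dist_le_three_mul_dist_add_jointDist (f x y) (g x y) (f 0 0) (g 0 0) (f x 0) (g x 0)
    (f 0 y) (g 0 y), jointDist_bottomEdge_le_VKapJ_rpow hκ hp hf hg hx,
    jointDist_leftEdge_le_VKapJ_rpow hκ hp hf hg hy,
    jointDist_corner_le_VKapJ_rpow hκ hp hf hg hx hy]

end JointVariation

section Metric

variable {κ : ℝ → ℝ} {p : ℝ} {f g h : ℝ → ℝ → M}

theorem rhoKap_comm : rhoKap κ p f g = rhoKap κ p g f := by
  rw [rhoKap, rhoKap, dist_comm, VKapJ_comm]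

theorem rhoKap_le {C : ℝ} (h : ∀ n t m s, IsPartition n t → IsPartition m s →
    dist (f 0 0) (g 0 0) + VKapPart κ p f g n t m s ≤ C) :
    rhoKap κ p f g ≤ C := by
  rw [rhoKap, ← le_sub_iff_add_le']
  exact VKapJ_le fun n t m s ht hs => le_sub_iff_add_le'.2 (h n t m s ht hs)

variable [IsIsometricVAdd M M]

theorem rhoKap_nonneg (hκ : IsDistortion κ) (hp : 1 ≤ p) (hf : MemKapBV κ p f)
    (hg : MemKapBV κ p g) : 0 ≤ rhoKap κ p f g :=
  add_nonneg dist_nonneg (VKapJ_nonneg hκ hp hf hg)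

theorem rhoKap_triangle (hκ : IsDistortion κ) (hp : 1 ≤ p) (hf : MemKapBV κ p f)
    (hg : MemKapBV κ p g) (hh : MemKapBV κ p h) :
    rhoKap κ p f g ≤ rhoKap κ p f h + rhoKap κ p h g := by
  simp only [rhoKap]
  linarith [dist_triangle (f 0 0) (h 0 0) (g 0 0), VKapJ_triangle hκ hp hf hg hh]

theorem dist_add_VKapPart_le_rhoKap (hκ : IsDistortion κ) (hp : 1 ≤ p)
    (hf : MemKapBV κ p f) (hg : MemKapBV κ p g) {n m : ℕ} {t s : ℕ → ℝ} (ht : IsPartition n t)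
    (hs : IsPartition m s) :
    dist (f 0 0) (g 0 0) + VKapPart κ p f g n t m s ≤ rhoKap κ p f g :=
  add_le_add le_rfl (VKapPart_le_VKapJ hκ hp hf hg ht hs)

theorem dist_apply_le_three_mul_rhoKap (hκ : IsDistortion κ) (hp : 1 ≤ p)
    (hf : MemKapBV κ p f) (hg : MemKapBV κ p g) (hρ : rhoKap κ p f g ≤ 1) {x y : ℝ}
    (hx : x ∈ Set.Icc (0 : ℝ) 1) (hy : y ∈ Set.Icc (0 : ℝ) 1) :
    dist (f x y) (g x y) ≤ 3 * rhoKap κ p f g := by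
  have hd := dist_nonneg (x := f 0 0) (y := g 0 0)
  have hV := VKapJ_nonneg hκ hp hf hg
  rw [rhoKap] at hρ ⊢
  have hVp := Real.rpow_le_self_of_le_one hV (by linarith) hp
  linarith [dist_apply_le_three_mul hκ hp hf hg hx hy]

theorem rhoKap_eq_zero_iff (hκ : IsDistortion κ) (hp : 1 ≤ p) (hf : MemKapBV κ p f)
    (hg : MemKapBV κ p g) :
    rhoKap κ p f g = 0 ↔ ∀ x ∈ Set.Icc (0 : ℝ) 1, ∀ y ∈ Set.Icc (0 : ℝ) 1, f x y = g x y := by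
  refine ⟨fun h x hx y hy => dist_le_zero.1 ?_, fun hfg => ?_⟩
  · simpa [h] using dist_apply_le_three_mul_rhoKap hκ hp hf hg (h.le.trans zero_le_one) hx hy
  · rw [rhoKap, VKapJ_eq_zero (by positivity) hfg,
      hfg 0 unitInterval.zero_mem 0 unitInterval.zero_mem, dist_self, add_zero]

theorem memKapBV_of_VKapPart_le (hκ : IsDistortion κ) (hp : 1 ≤ p) (hg : MemKapBV κ p g)
    {C : ℝ} (hC : ∀ n t m s, IsPartition n t → IsPartition m s → VKapPart κ p g f n t m s ≤ C) :
    MemKapBV κ p f := by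
  refine ⟨⟨C + sSup (kSet1 κ p g), ?_⟩, ⟨C + sSup (kSet2 κ p g), ?_⟩,
    ⟨C + sSup (kSet12 κ p g), ?_⟩⟩
  · rintro _ ⟨n, t, ht, rfl⟩
    linarith [kSum1_le_kSum1J_add (f := g) (g := f) hκ hp ht, le_csSup hg.1 ⟨n, t, ht, rfl⟩,
      kSum1J_le_VKapPart (p := p) (f := g) (g := f) hκ ht isPartition_one,
      hC n t 1 _ ht isPartition_one]
  · rintro _ ⟨m, s, hs, rfl⟩
    have h : kSum2 κ p f m s ≤ kSum2J κ p g f m s + kSum2 κ p g m s :=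
      kSum1_le_kSum1J_add (f := swap g) (g := swap f) hκ hp hs
    linarith [le_csSup hg.2.1 ⟨m, s, hs, rfl⟩, hC 1 _ m s isPartition_one hs,
      kSum2J_le_VKapPart (p := p) (f := g) (g := f) hκ isPartition_one hs]
  · rintro _ ⟨n, t, m, s, ht, hs, rfl⟩
    linarith [kSum12_le_kSum12J_add (f := g) (g := f) hκ hp ht hs,
      le_csSup hg.2.2 ⟨n, t, m, s, ht, hs, rfl⟩,
      kSum12J_le_VKapPart (p := p) (f := g) (g := f) hκ ht hs, hC n t m s ht hs]

section Complete

variable {F : ℕ → ℝ → ℝ → M}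

theorem cauchySeq_apply_of_rhoKap (hκ : IsDistortion κ) (hp : 1 ≤ p)
    (hF : ∀ u, MemKapBV κ p (F u))
    (hC : ∀ ε > (0 : ℝ), ∃ N, ∀ u ≥ N, ∀ v ≥ N, rhoKap κ p (F u) (F v) < ε) {x y : ℝ}
    (hx : x ∈ Set.Icc (0 : ℝ) 1) (hy : y ∈ Set.Icc (0 : ℝ) 1) : CauchySeq (F · x y) := by
  refine Metric.cauchySeq_iff.2 fun ε hε => ?_
  obtain ⟨N, hN⟩ := hC (min 1 (ε / 4)) (by positivity)
  refine ⟨N, fun u hu v hv => ?_⟩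
  have hρ := hN u hu v hv
  have := dist_apply_le_three_mul_rhoKap hκ hp (hF u) (hF v) (hρ.le.trans (min_le_left _ _)) hx hy
  linarith [min_le_right 1 (ε / 4)]

theorem dist_add_VKapPart_le_of_tendsto (hκ : IsDistortion κ) (hp : 1 ≤ p)
    (hF : ∀ u, MemKapBV κ p (F u)) {f : ℝ → ℝ → M}
    (hf : ∀ x ∈ Set.Icc (0 : ℝ) 1, ∀ y ∈ Set.Icc (0 : ℝ) 1, Tendsto (F · x y) atTop (𝓝 (f x y)))
    {ε : ℝ} {N : ℕ} (hN : ∀ u ≥ N, ∀ v ≥ N, rhoKap κ p (F u) (F v) < ε) {u : ℕ} (hu : N ≤ u)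
    {n m : ℕ} {t s : ℕ → ℝ} (ht : IsPartition n t) (hs : IsPartition m s) :
    dist (F u 0 0) (f 0 0) + VKapPart κ p (F u) f n t m s ≤ ε := by
  refine le_of_tendsto ((tendsto_const_nhds.dist (hf 0 unitInterval.zero_mem 0
    unitInterval.zero_mem)).add (tendsto_VKapPart (by positivity) ht hs hf)) ?_
  filter_upwards [eventually_ge_atTop N] with v hv
  exact (dist_add_VKapPart_le_rhoKap hκ hp (hF u) (hF v) ht hs).trans (hN u hu v hv).le

theorem exists_tendsto_rhoKap [CompleteSpace M] (hκ : IsDistortion κ) (hp : 1 ≤ p)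
    (hF : ∀ u, MemKapBV κ p (F u))
    (hC : ∀ ε > (0 : ℝ), ∃ N, ∀ u ≥ N, ∀ v ≥ N, rhoKap κ p (F u) (F v) < ε) :
    ∃ f, MemKapBV κ p f ∧ Tendsto (fun u => rhoKap κ p (F u) f) atTop (𝓝 0) := by
  have : Nonempty M := ⟨F 0 0 0⟩
  have hlim : ∀ x ∈ Set.Icc (0 : ℝ) 1, ∀ y ∈ Set.Icc (0 : ℝ) 1,
      ∃ l, Tendsto (F · x y) atTop (𝓝 l) := fun _ hx _ hy =>
    cauchySeq_tendsto_of_complete (cauchySeq_apply_of_rhoKap hκ hp hF hC hx hy)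
  choose! f hf using hlim
  obtain ⟨N₁, hN₁⟩ := hC 1 one_pos
  have hfBV : MemKapBV κ p f := memKapBV_of_VKapPart_le hκ hp (hF N₁) fun _ _ _ _ ht hs =>
    (le_add_of_nonneg_left dist_nonneg).trans
      (dist_add_VKapPart_le_of_tendsto hκ hp hF hf hN₁ le_rfl ht hs)
  refine ⟨f, hfBV, tendsto_order.2 ⟨fun a ha => Eventually.of_forall fun u =>
    ha.trans_le (rhoKap_nonneg hκ hp (hF u) hfBV), fun a ha => ?_⟩⟩
  obtain ⟨N, hN⟩ := hC (a / 2) (by positivity)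
  filter_upwards [eventually_ge_atTop N] with u hu
  exact (rhoKap_le fun _ _ _ _ ht hs =>
    dist_add_VKapPart_le_of_tendsto hκ hp hF hf hN hu ht hs).trans_lt (by linarith)

end Complete

end Metric

/-- For a complete metric semigroup `M`, a distortion function `κ` and `p ∈ (1,∞)`,
the bivariate Korenblum bounded variation space `(κBV(I×I, M), ρ_κ)` is a complete
metric space. -/
theorem KapBV_complete_metric [CompleteSpace M] (κ : ℝ → ℝ) (hκ : IsDistortion κ)
    (p : ℝ) (hp : 1 < p)
    (hd : ∀ u v w : M, dist (u + w) (v + w) = dist u v) :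
    (∀ f g : ℝ → ℝ → M, MemKapBV κ p f → MemKapBV κ p g →
      (rhoKap κ p f g = 0 ↔
        ∀ t ∈ Set.Icc (0:ℝ) 1, ∀ s ∈ Set.Icc (0:ℝ) 1, f t s = g t s))
    ∧ (∀ f g : ℝ → ℝ → M, MemKapBV κ p f → MemKapBV κ p g →
        rhoKap κ p f g = rhoKap κ p g f)
    ∧ (∀ f g h : ℝ → ℝ → M, MemKapBV κ p f → MemKapBV κ p g → MemKapBV κ p h →
        rhoKap κ p f g ≤ rhoKap κ p f h + rhoKap κ p h g)
    ∧ (∀ F : ℕ → ℝ → ℝ → M, (∀ u, MemKapBV κ p (F u)) →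
        (∀ ε > (0:ℝ), ∃ N, ∀ u ≥ N, ∀ v ≥ N, rhoKap κ p (F u) (F v) < ε) →
        ∃ f : ℝ → ℝ → M, MemKapBV κ p f ∧
          Filter.Tendsto (fun u => rhoKap κ p (F u) f) Filter.atTop (nhds 0)) := by
  have : IsIsometricVAdd M M :=
    ⟨fun c => Isometry.of_dist_eq fun x y => by simp only [vadd_eq_add, add_comm c, hd]⟩
  exact ⟨fun _ _ hf hg => rhoKap_eq_zero_iff hκ hp.le hf hg, fun _ _ _ _ => rhoKap_comm,
    fun _ _ _ hf hg hh => rhoKap_triangle hκ hp.le hf hg hh,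
    fun _ hF hC => exists_tendsto_rhoKap hκ hp.le hF hC⟩
end
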